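/- arXiv:1907.01056 — 7 statements merged into one kernel-verified Lean document; each statement's English description precedes it below -/
import Mathlib

section
/- Let the setting be as in the shared semi-static betting setup. Then the supremum over constant strategies of the expected utility of the envelope-modified terminal wealth equals the supremum over all admissible (measurable, time-dependent) strategies of the same quantity: sup_{û ∈ [0,1]^n} E[U(Ŷ_T^{û})] = sup_{u admissible} E[U(Ŷ_T^{u})], where on the left û denotes the constant strategy u_s ≡ û for s ∈ [t,T). -/
open MeasureTheory Set


lemma jensen_avg_mem_and_le {a b : ℝ} (ha : 0 ≤ a) (hab : a < b) {φ : ℝ → ℝ}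
    (hφ : ConcaveOn ℝ (Icc a b) φ) (hφ0 : ∀ y ∈ Icc a b, 0 ≤ φ y)
    {t T : ℝ} (htT : t < T) {v : ℝ → ℝ} (hv : Measurable v)
    (hvmem : ∀ s, v s ∈ Icc a b) :
    (∫ s in Ico t T, v s) / (T - t) ∈ Icc a b ∧
      ∫ s in Ico t T, φ (v s) ≤ (T - t) * φ ((∫ s in Ico t T, v s) / (T - t)) := by
  have hℓ : (0:ℝ) < T - t := sub_pos.mpr htT
  haveI : IsFiniteMeasure (volume.restrict (Ico t T)) :=
    ⟨by rw [Measure.restrict_apply_univ]; simp [Real.volume_Ico]⟩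
  have hIc : ∀ c : ℝ, (∫ _s in Ico t T, c) = (T - t) * c := by
    intro c
    rw [setIntegral_const, Real.volume_real_Ico_of_le htT.le, smul_eq_mul]
  have hv_int : Integrable v (volume.restrict (Ico t T)) := by
    refine Integrable.mono' (integrable_const b) hv.aestronglyMeasurable
      (ae_of_all _ fun s => ?_)
    rw [Real.norm_eq_abs, abs_of_nonneg (ha.trans (hvmem s).1)]
    exact (hvmem s).2
  set d := ∫ s in Ico t T, v s with hd_def
  have hd1 : (T - t) * a ≤ d := by
    rw [← hIc a]
    exact integral_mono (integrable_const a) hv_int fun s => (hvmem s).1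
  have hd2 : d ≤ (T - t) * b := by
    rw [← hIc b]
    exact integral_mono hv_int (integrable_const b) fun s => (hvmem s).2
  set m := d / (T - t) with hm_def
  have hdm : d = (T - t) * m := by rw [hm_def]; field_simp
  have hm : m ∈ Icc a b :=
    ⟨(le_div_iff₀ hℓ).mpr (by linarith), (div_le_iff₀ hℓ).mpr (by linarith)⟩
  refine ⟨hm, ?_⟩
  rcases eq_or_lt_of_le hm.1 with hma | hma
  · -- m = a : v is a.e. equal to a
    have h0 : ∫ s in Ico t T, (v s - a) = 0 := by
      rw [integral_sub hv_int (integrable_const a), hIc a, ← hd_def, hdm, ← hma]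
      ring
    have hnn : 0 ≤ᵐ[volume.restrict (Ico t T)] fun s => v s - a :=
      ae_of_all _ fun s => sub_nonneg.mpr (hvmem s).1
    have hae := (integral_eq_zero_iff_of_nonneg_ae hnn
      (hv_int.sub (integrable_const a))).mp h0
    have hcongr : ∫ s in Ico t T, φ (v s) = ∫ _s in Ico t T, φ a := by
      refine integral_congr_ae ?_
      filter_upwards [hae] with s hs
      have : v s = a := by have := hs; simpa [sub_eq_zero] using this
      rw [this]
    rw [hcongr, hIc, ← hma]
  rcases eq_or_lt_of_le hm.2 with hmb | hmb
  · -- m = b : v is a.e. equal to b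
    have h0 : ∫ s in Ico t T, (b - v s) = 0 := by
      rw [integral_sub (integrable_const b) hv_int, hIc b, ← hd_def, hdm, hmb]
      ring
    have hnn : 0 ≤ᵐ[volume.restrict (Ico t T)] fun s => b - v s :=
      ae_of_all _ fun s => sub_nonneg.mpr (hvmem s).2
    have hae := (integral_eq_zero_iff_of_nonneg_ae hnn
      ((integrable_const b).sub hv_int)).mp h0
    have hcongr : ∫ s in Ico t T, φ (v s) = ∫ _s in Ico t T, φ b := by
      refine integral_congr_ae ?_
      filter_upwards [hae] with s hs
      have : v s = b := by have := hs; simp only [Pi.zero_apply] at this; linarith [sub_eq_zero.mp this]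
      rw [this]
    rw [hcongr, hIc, hmb]
  -- a < m < b
  by_cases hint : Integrable (fun s => φ (v s)) (volume.restrict (Ico t T))
  · set Sl := (fun z => (φ z - φ m) / (z - m)) '' Ioc m b with hSl_def
    have hKne : Sl.Nonempty := ⟨_, ⟨b, ⟨hmb, le_rfl⟩, rfl⟩⟩
    have hKbdd : BddAbove Sl := by
      refine ⟨(φ m - φ a) / (m - a), ?_⟩
      rintro _ ⟨zz, hzz, rfl⟩
      exact hφ.slope_anti_adjacent ⟨le_rfl, hab.le⟩
        ⟨(hma.trans hzz.1).le.trans' (le_refl a) |>.trans' le_rfl, hzz.2⟩ hma hzz.1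
    set K := sSup Sl with hK_def
    have hsupp : ∀ y ∈ Icc a b, φ y ≤ φ m + K * (y - m) := by
      intro y hy
      rcases lt_trichotomy y m with h | h | h
      · have hK_le : K ≤ (φ m - φ y) / (m - y) := by
          refine csSup_le hKne ?_
          rintro _ ⟨zz, hzz, rfl⟩
          exact hφ.slope_anti_adjacent hy ⟨hy.1.trans (h.le.trans hzz.1.le), hzz.2⟩ h hzz.1
        have h1 : K * (m - y) ≤ φ m - φ y := by
          have hmy : (0:ℝ) < m - y := by linarith
          have := mul_le_mul_of_nonneg_right hK_le hmy.le
          rwa [div_mul_cancel₀ _ (ne_of_gt hmy)] at this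
        nlinarith
      · rw [h]; simp
      · have hK_ge : (φ y - φ m) / (y - m) ≤ K :=
          le_csSup hKbdd ⟨y, ⟨h, hy.2⟩, rfl⟩
        have hym : (0:ℝ) < y - m := by linarith
        have := mul_le_mul_of_nonneg_right hK_ge hym.le
        rw [div_mul_cancel₀ _ (ne_of_gt hym)] at this
        linarith
    have hint3 : Integrable (fun s => K * (v s - m)) (volume.restrict (Ico t T)) :=
      (hv_int.sub (integrable_const m)).const_mul K
    have hint2 : Integrable (fun s => φ m + K * (v s - m)) (volume.restrict (Ico t T)) :=
      (integrable_const _).add hint3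
    calc ∫ s in Ico t T, φ (v s)
        ≤ ∫ s in Ico t T, (φ m + K * (v s - m)) :=
          integral_mono hint hint2 fun s => hsupp (v s) (hvmem s)
      _ = (∫ _s in Ico t T, φ m) + K * ((∫ s in Ico t T, v s) - ∫ _s in Ico t T, m) := by
          rw [integral_add (integrable_const _) hint3,
            integral_const_mul K, integral_sub hv_int (integrable_const m)]
      _ = (T - t) * φ m := by rw [hIc, hIc, ← hd_def, hdm]; ring
  · rw [integral_undef hint]
    exact mul_nonneg hℓ.le (hφ0 m hm)


lemma aux_integrable {Ω : Type*} [MeasurableSpace Ω] (μ : Measure Ω) [IsFiniteMeasure μ]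
    {n : ℕ} (A : Fin n → Set Ω) (hA : ∀ i, MeasurableSet (A i))
    (U : ℝ → ℝ) (hU_cont : Continuous U) (hU_mono : StrictMono U)
    (x C : ℝ) (q D : Fin n → ℝ) :
    Integrable (fun ω => U (x - ∑ i, q i * (A i).indicator (fun _ => (1:ℝ)) ω
      + C - ∑ i, D i * (A i).indicator (fun _ => (1:ℝ)) ω)) μ := by
  have hind : ∀ i ω, (A i).indicator (fun _ => (1:ℝ)) ω ∈ Icc (0:ℝ) 1 := by
    intro i ω
    by_cases h : ω ∈ A i <;> simp [Set.indicator_apply, h]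
  have hbd : ∀ (c : Fin n → ℝ) ω, |∑ i, c i * (A i).indicator (fun _ => (1:ℝ)) ω| ≤ ∑ i, |c i| := by
    intro c ω
    calc |∑ i, c i * (A i).indicator (fun _ => (1:ℝ)) ω|
        ≤ ∑ i, |c i * (A i).indicator (fun _ => (1:ℝ)) ω| := Finset.abs_sum_le_sum_abs _ _
      _ ≤ ∑ i, |c i| := by
          refine Finset.sum_le_sum fun i _ => ?_
          rw [abs_mul]
          have h1 : |(A i).indicator (fun _ => (1:ℝ)) ω| ≤ 1 := by
            rw [abs_of_nonneg (hind i ω).1]; exact (hind i ω).2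
          calc |c i| * |(A i).indicator (fun _ => (1:ℝ)) ω| ≤ |c i| * 1 :=
                mul_le_mul_of_nonneg_left h1 (abs_nonneg _)
            _ = |c i| := mul_one _
  set lo := x - ∑ i, |q i| + C - ∑ i, |D i| with hlo
  set hi := x + ∑ i, |q i| + C + ∑ i, |D i| with hhi
  have harg : ∀ ω, (x - ∑ i, q i * (A i).indicator (fun _ => (1:ℝ)) ω
      + C - ∑ i, D i * (A i).indicator (fun _ => (1:ℝ)) ω) ∈ Icc lo hi := by
    intro ω
    have h1 := abs_le.mp (hbd q ω)
    have h2 := abs_le.mp (hbd D ω)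
    constructor
    · rw [hlo]; linarith [h1.2, h2.2]
    · rw [hhi]; linarith [h1.1, h2.1]
  have hmeas : Measurable (fun ω => x - ∑ i, q i * (A i).indicator (fun _ => (1:ℝ)) ω
      + C - ∑ i, D i * (A i).indicator (fun _ => (1:ℝ)) ω) := by
    have hsum : ∀ c : Fin n → ℝ,
        Measurable (fun ω => ∑ i, c i * (A i).indicator (fun _ => (1:ℝ)) ω) := by
      intro c
      exact Finset.measurable_sum _ fun i _ =>
        (measurable_const.indicator (hA i)).const_mul (c i)
    exact (((measurable_const.sub (hsum q)).add measurable_const).sub (hsum D))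
  refine Integrable.mono' (integrable_const (|U lo| + |U hi|))
    (hU_cont.measurable.comp hmeas).aestronglyMeasurable (ae_of_all _ fun ω => ?_)
  rw [Real.norm_eq_abs]
  have h1 : U lo ≤ U _ := hU_mono.monotone (harg ω).1
  have h2 : U _ ≤ U hi := hU_mono.monotone (harg ω).2
  rw [abs_le]
  constructor
  · have : -|U lo| ≤ U lo := neg_abs_le _
    have h3 : (0:ℝ) ≤ |U hi| := abs_nonneg _
    linarith
  · have : U hi ≤ |U hi| := le_abs_self _
    have h3 : (0:ℝ) ≤ |U lo| := abs_nonneg _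
    linarith

/-- A measurable function agreeing with a concave function on `Icc a b`. -/
lemma concave_comp_measurable {a b : ℝ} (hab : a < b) {φ : ℝ → ℝ}
    (hφ : ConcaveOn ℝ (Icc a b) φ) {v : ℝ → ℝ} (hv : Measurable v)
    (hvmem : ∀ s, v s ∈ Icc a b) : Measurable (fun s => φ (v s)) := by
  have hcont : ContinuousOn φ (Ioo a b) := by
    have := hφ.continuousOn_interior
    rwa [interior_Icc] at this
  set g : ℝ → ℝ := Function.extend (Subtype.val : Ioo a b → ℝ)
      (fun y : Ioo a b => φ y)
      (fun y => if y = a then φ a else if y = b then φ b else 0) with hg_def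
  have hg_meas : Measurable g := by
    refine (MeasurableEmbedding.subtype_coe measurableSet_Ioo).measurable_extend
      hcont.restrict.measurable ?_
    exact Measurable.ite measurableSet_eq measurable_const
      (Measurable.ite measurableSet_eq measurable_const measurable_const)
  have hg_eq : ∀ y ∈ Icc a b, g y = φ y := by
    intro y hy
    rcases eq_or_lt_of_le hy.1 with h1 | h1
    · have hnr : ¬∃ z : Ioo a b, (z : ℝ) = y := by
        rintro ⟨z, hz⟩; exact absurd (hz ▸ z.2).1 (by rw [← h1]; exact lt_irrefl a)
      rw [hg_def, Function.extend_apply' _ _ _ hnr, if_pos h1.symm, ← h1]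
    rcases eq_or_lt_of_le hy.2 with h2 | h2
    · have hnr : ¬∃ z : Ioo a b, (z : ℝ) = y := by
        rintro ⟨z, hz⟩; exact absurd (hz ▸ z.2).2 (by rw [h2]; exact lt_irrefl b)
      rw [hg_def, Function.extend_apply' _ _ _ hnr, if_neg (by rw [h2]; exact hab.ne'),
        if_pos h2, h2]
    · have : y = ((⟨y, h1, h2⟩ : Ioo a b) : ℝ) := rfl
      rw [hg_def, this, Subtype.val_injective.extend_apply]
  have : (fun s => φ (v s)) = fun s => g (v s) :=
    funext fun s => (hg_eq (v s) (hvmem s)).symm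
  rw [this]
  exact hg_meas.comp hv

/-- Semi-static betting: the supremum over constant strategies of the expected utility of
the envelope-modified terminal wealth equals the supremum over all admissible strategies. -/
theorem stmt0
    {Ω : Type*} [MeasurableSpace Ω] (μ : Measure Ω) [IsProbabilityMeasure μ]
    (n : ℕ) (A : Fin n → Set Ω) (hA : ∀ i, MeasurableSet (A i))
    (t T : ℝ) (htT : t < T) (x : ℝ) (q : Fin n → ℝ) (hq : ∀ i, 0 ≤ q i)
    (lam : Fin n → ℝ → ℝ)
    (hlam_cont : ∀ i, ContinuousOn (lam i) (Icc 0 1))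
    (hlam_anti : ∀ i, StrictAntiOn (lam i) (Icc 0 1))
    (hlam_nonneg : ∀ i, ∀ u ∈ Icc (0:ℝ) 1, 0 ≤ lam i u)
    (laminv : Fin n → ℝ → ℝ)
    (hlaminv : ∀ i, ∀ u ∈ Icc (0:ℝ) 1, laminv i (lam i u) = u)
    (fhat : Fin n → ℝ → ℝ)
    (hfhat_conc : ∀ i, ConcaveOn ℝ (Icc (lam i 1) (lam i 0)) (fhat i))
    (hfhat_ge : ∀ i, ∀ y ∈ Icc (lam i 1) (lam i 0), y * laminv i y ≤ fhat i y)
    (hfhat_min : ∀ i, ∀ g : ℝ → ℝ, ConcaveOn ℝ (Icc (lam i 1) (lam i 0)) g →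
      (∀ y ∈ Icc (lam i 1) (lam i 0), y * laminv i y ≤ g y) →
      ∀ y ∈ Icc (lam i 1) (lam i 0), fhat i y ≤ g y)
    (U : ℝ → ℝ) (hU_cont : Continuous U) (hU_mono : StrictMono U) :
    sSup { r : ℝ | ∃ uhat : Fin n → ℝ, (∀ i, uhat i ∈ Icc (0:ℝ) 1) ∧
        r = ∫ ω, U (x - ∑ i, q i * (A i).indicator (fun _ => (1:ℝ)) ω
              + ∑ i, ∫ _s in Ico t T, fhat i (lam i (uhat i))
              - ∑ i, (∫ _s in Ico t T, lam i (uhat i)) *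
                  (A i).indicator (fun _ => (1:ℝ)) ω) ∂μ }
    = sSup { r : ℝ | ∃ u : ℝ → Fin n → ℝ, Measurable u ∧
        (∀ s ∈ Ico t T, ∀ i, u s i ∈ Icc (0:ℝ) 1) ∧
        r = ∫ ω, U (x - ∑ i, q i * (A i).indicator (fun _ => (1:ℝ)) ω
              + ∑ i, ∫ s in Ico t T, fhat i (lam i (u s i))
              - ∑ i, (∫ s in Ico t T, lam i (u s i)) *
                  (A i).indicator (fun _ => (1:ℝ)) ω) ∂μ } := by
  have hℓ : (0:ℝ) < T - t := sub_pos.mpr htT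
  haveI : IsFiniteMeasure (volume.restrict (Ico t T)) :=
    ⟨by rw [Measure.restrict_apply_univ]; simp [Real.volume_Ico]⟩
  set Sc := { r : ℝ | ∃ uhat : Fin n → ℝ, (∀ i, uhat i ∈ Icc (0:ℝ) 1) ∧
        r = ∫ ω, U (x - ∑ i, q i * (A i).indicator (fun _ => (1:ℝ)) ω
              + ∑ i, ∫ _s in Ico t T, fhat i (lam i (uhat i))
              - ∑ i, (∫ _s in Ico t T, lam i (uhat i)) *
                  (A i).indicator (fun _ => (1:ℝ)) ω) ∂μ } with hSc_def
  set S := { r : ℝ | ∃ u : ℝ → Fin n → ℝ, Measurable u ∧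
        (∀ s ∈ Ico t T, ∀ i, u s i ∈ Icc (0:ℝ) 1) ∧
        r = ∫ ω, U (x - ∑ i, q i * (A i).indicator (fun _ => (1:ℝ)) ω
              + ∑ i, ∫ s in Ico t T, fhat i (lam i (u s i))
              - ∑ i, (∫ s in Ico t T, lam i (u s i)) *
                  (A i).indicator (fun _ => (1:ℝ)) ω) ∂μ } with hS_def
  -- basic facts
  have hab : ∀ i, lam i 1 < lam i 0 :=
    fun i => hlam_anti i ⟨le_rfl, zero_le_one⟩ ⟨zero_le_one, le_rfl⟩ zero_lt_one
  have ha0 : ∀ i, 0 ≤ lam i 1 := fun i => hlam_nonneg i 1 ⟨zero_le_one, le_rfl⟩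
  have hlam_bounds : ∀ i, ∀ z ∈ Icc (0:ℝ) 1, lam i z ∈ Icc (lam i 1) (lam i 0) := by
    intro i z hz
    constructor
    · rcases eq_or_lt_of_le hz.2 with h | h
      · rw [h]
      · exact (hlam_anti i hz ⟨zero_le_one, le_rfl⟩ h).le
    · rcases eq_or_lt_of_le hz.1 with h | h
      · rw [← h]
      · exact (hlam_anti i ⟨le_rfl, zero_le_one⟩ hz h).le
  have hsurj : ∀ i, ∀ y ∈ Icc (lam i 1) (lam i 0), ∃ z ∈ Icc (0:ℝ) 1, lam i z = y := by
    intro i y hy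
    obtain ⟨z, hz, hzy⟩ := intermediate_value_Icc' zero_le_one (hlam_cont i) hy
    exact ⟨z, hz, hzy⟩
  have hφ0 : ∀ i, ∀ y ∈ Icc (lam i 1) (lam i 0), 0 ≤ fhat i y := by
    intro i y hy
    obtain ⟨z, hz, rfl⟩ := hsurj i y hy
    refine le_trans ?_ (hfhat_ge i _ hy)
    rw [hlaminv i z hz]
    exact mul_nonneg (hlam_nonneg i z hz) hz.1
  have hφub : ∀ i, ∀ y ∈ Icc (lam i 1) (lam i 0), fhat i y ≤ lam i 0 := by
    intro i
    refine hfhat_min i (fun _ => lam i 0) (concaveOn_const _ (convex_Icc _ _)) ?_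
    intro y hy
    obtain ⟨z, hz, rfl⟩ := hsurj i y hy
    rw [hlaminv i z hz]
    calc lam i z * z ≤ lam i z * 1 :=
          mul_le_mul_of_nonneg_left hz.2 (hlam_nonneg i z hz)
      _ = lam i z := mul_one _
      _ ≤ lam i 0 := (hlam_bounds i z hz).2
  -- constant integral computation
  have hIc : ∀ c : ℝ, (∫ _s in Ico t T, c) = (T - t) * c := by
    intro c
    rw [setIntegral_const, Real.volume_real_Ico_of_le htT.le, smul_eq_mul]
  -- every element of S is dominated by an element of Sc
  have hdom : ∀ r ∈ S, ∃ r' ∈ Sc, r ≤ r' := by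
    rintro r ⟨u, hu_meas, hu_mem, rfl⟩
    set w : Fin n → ℝ → ℝ := fun i s => if s ∈ Ico t T then u s i else 0 with hw_def
    have hw_meas : ∀ i, Measurable (w i) := fun i =>
      Measurable.ite measurableSet_Ico ((measurable_pi_apply i).comp hu_meas) measurable_const
    have hw_mem : ∀ i s, w i s ∈ Icc (0:ℝ) 1 := by
      intro i s
      simp only [hw_def]
      by_cases h : s ∈ Ico t T
      · rw [if_pos h]; exact hu_mem s h i
      · rw [if_neg h]; exact ⟨le_rfl, zero_le_one⟩
    set v : Fin n → ℝ → ℝ := fun i s => lam i (w i s) with hv_def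
    have hv_meas : ∀ i, Measurable (v i) := by
      intro i
      have h1 : Measurable (fun s => (⟨w i s, hw_mem i s⟩ : Icc (0:ℝ) 1)) :=
        (hw_meas i).subtype_mk
      exact ((hlam_cont i).restrict.measurable).comp h1
    have hv_mem : ∀ i s, v i s ∈ Icc (lam i 1) (lam i 0) :=
      fun i s => hlam_bounds i _ (hw_mem i s)
    have hjen := fun i => jensen_avg_mem_and_le (ha0 i) (hab i) (hfhat_conc i) (hφ0 i)
      htT (hv_meas i) (hv_mem i)
    set d : Fin n → ℝ := fun i => ∫ s in Ico t T, v i s with hd_def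
    set m : Fin n → ℝ := fun i => d i / (T - t) with hm_def
    choose z hz hlz using fun i => hsurj i (m i) (hjen i).1
    -- integrability of fhat ∘ v
    have hFmeas : ∀ i, Measurable (fun s => fhat i (v i s)) := fun i =>
      concave_comp_measurable (hab i) (hfhat_conc i) (hv_meas i) (hv_mem i)
    have hFint : ∀ i, Integrable (fun s => fhat i (v i s)) (volume.restrict (Ico t T)) := by
      intro i
      refine Integrable.mono' (integrable_const (lam i 0))
        (hFmeas i).aestronglyMeasurable (ae_of_all _ fun s => ?_)
      rw [Real.norm_eq_abs, abs_of_nonneg (hφ0 i _ (hv_mem i s))]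
      exact hφub i _ (hv_mem i s)
    -- rewriting lemmas
    have hcongr2 : ∀ i, (∫ s in Ico t T, lam i (u s i)) = d i := by
      intro i
      rw [hd_def]
      refine setIntegral_congr_fun measurableSet_Ico fun s hs => ?_
      simp only [hv_def, hw_def]
      rw [if_pos hs]
    have hmain : ∀ i (c : ℝ), (∫ s in Ico t T, (fhat i (lam i (u s i)) - c))
        = ∫ s in Ico t T, (fhat i (v i s) - c) := by
      intro i c
      refine setIntegral_congr_fun measurableSet_Ico fun s hs => ?_
      simp only [hv_def, hw_def]
      rw [if_pos hs]
    have hconst2 : ∀ i, (∫ _s in Ico t T, lam i (z i)) = d i := by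
      intro i
      rw [hIc, hlz i, hm_def]
      exact mul_div_cancel₀ _ (ne_of_gt hℓ)
    have hconst_main : ∀ i (c : ℝ), (∫ _s in Ico t T, (fhat i (lam i (z i)) - c))
        = (T - t) * (fhat i (m i) - c) := by
      intro i c
      rw [hIc, hlz i]
    -- Jensen-type key inequality
    have key : ∀ (c : ℝ) i, (∫ s in Ico t T, (fhat i (v i s) - c))
        ≤ (T - t) * (fhat i (m i) - c) := by
      intro c i
      rw [integral_sub (hFint i) (integrable_const c), hIc c]
      have h1 := (hjen i).2
      have h2 : (T - t) * (fhat i (m i) - c) = (T - t) * fhat i (m i) - (T - t) * c := by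
        ring
      rw [h2]
      have h3 : (T - t) * fhat i ((∫ s in Ico t T, v i s) / (T - t)) = (T - t) * fhat i (m i) := by
        rw [hm_def, hd_def]
      linarith [h3 ▸ h1]
    refine ⟨_, ⟨z, hz, rfl⟩, ?_⟩
    simp only [hcongr2, hmain, hconst2, hconst_main]
    -- integrability of both sides
    have hsplit : ∀ (c : ℝ) i, (∫ s in Ico t T, (fhat i (v i s) - c))
        = (∫ s in Ico t T, fhat i (v i s)) - (T - t) * c := by
      intro c i
      rw [integral_sub (hFint i) (integrable_const c), hIc c]
    have hDsum : ∀ ω, ∑ j, ((n:ℝ) * ((T - t) * d j)) * (A j).indicator (fun _ => (1:ℝ)) ω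
        = (n:ℝ) * ((T - t) * ∑ j, d j * (A j).indicator (fun _ => (1:ℝ)) ω) := by
      intro ω
      rw [Finset.mul_sum, Finset.mul_sum]
      exact Finset.sum_congr rfl fun j _ => by ring
    have hint_u : Integrable (fun ω => U (x - ∑ i, q i * (A i).indicator (fun _ => (1:ℝ)) ω
        + ∑ i, ∫ s in Ico t T, (fhat i (v i s)
          - ∑ j, d j * (A j).indicator (fun _ => (1:ℝ)) ω))) μ := by
      refine (aux_integrable μ A hA U hU_cont hU_mono x
        (∑ i, ∫ s in Ico t T, fhat i (v i s)) q
        (fun j => (n:ℝ) * ((T - t) * d j))).congr (ae_of_all _ fun ω => ?_)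
      dsimp only
      congr 1
      rw [Finset.sum_congr rfl fun i _ =>
        hsplit (∑ j, d j * (A j).indicator (fun _ => (1:ℝ)) ω) i]
      rw [Finset.sum_sub_distrib, Finset.sum_const, Finset.card_univ, Fintype.card_fin,
        nsmul_eq_mul, hDsum ω]
      ring
    have hint_z : Integrable (fun ω => U (x - ∑ i, q i * (A i).indicator (fun _ => (1:ℝ)) ω
        + ∑ i, (T - t) * (fhat i (m i)
          - ∑ j, d j * (A j).indicator (fun _ => (1:ℝ)) ω))) μ := by
      refine (aux_integrable μ A hA U hU_cont hU_mono x
        (∑ i, (T - t) * fhat i (m i)) q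
        (fun j => (n:ℝ) * ((T - t) * d j))).congr (ae_of_all _ fun ω => ?_)
      dsimp only
      congr 1
      have : ∀ i : Fin n, (T - t) * (fhat i (m i)
          - ∑ j, d j * (A j).indicator (fun _ => (1:ℝ)) ω)
          = (T - t) * fhat i (m i)
            - (T - t) * ∑ j, d j * (A j).indicator (fun _ => (1:ℝ)) ω := fun i => by ring
      rw [Finset.sum_congr rfl fun i _ => this i]
      rw [Finset.sum_sub_distrib, Finset.sum_const, Finset.card_univ, Fintype.card_fin,
        nsmul_eq_mul, hDsum ω]
      ring
    refine integral_mono hint_u hint_z fun ω => ?_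
    refine hU_mono.monotone ?_
    have hsum : (∑ i, ∫ s in Ico t T, (fhat i (v i s)
          - ∑ j, d j * (A j).indicator (fun _ => (1:ℝ)) ω))
        ≤ ∑ i, (T - t) * (fhat i (m i)
          - ∑ j, d j * (A j).indicator (fun _ => (1:ℝ)) ω) :=
      Finset.sum_le_sum fun i _ => key _ i
    linarith
  -- constant strategies are admissible
  have hsub : Sc ⊆ S := by
    rintro r ⟨uh, h1, h2⟩
    exact ⟨fun _ => uh, measurable_const, fun s _ i => h1 i, h2⟩
  have hScne : Sc.Nonempty := ⟨_, ⟨fun _ => 0, fun i => ⟨le_rfl, zero_le_one⟩, rfl⟩⟩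
  by_cases hbdd : BddAbove Sc
  · have hSbdd : BddAbove S := by
      obtain ⟨M, hM⟩ := hbdd
      refine ⟨M, fun r hr => ?_⟩
      obtain ⟨r', hr', hle⟩ := hdom r hr
      exact hle.trans (hM hr')
    refine le_antisymm (csSup_le_csSup hSbdd hScne hsub) ?_
    refine csSup_le (hScne.mono hsub) fun r hr => ?_
    obtain ⟨r', hr', hle⟩ := hdom r hr
    exact hle.trans (le_csSup hbdd hr')
  · have hSnb : ¬BddAbove S := fun h => hbdd (h.mono hsub)
    rw [Real.sSup_of_not_bddAbove hbdd, Real.sSup_of_not_bddAbove hSnb]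
end

section
/- Let the setting be as in the shared semi-static betting setup. Then the value of the dynamic problem dominates the static envelope problem: sup_{u admissible} E[U(Y_T^{u})] ≥ sup_{û ∈ [0,1]^n} E[U(Ŷ_T^{û})], where on the right û denotes the constant strategy u_s ≡ û for s ∈ [t,T). -/
open MeasureTheory Set

lemma combo_exists (T : ℝ) : ∀ (m : ℕ) (θ v : Fin m → ℝ), (∀ j, 0 ≤ θ j) →
    ∑ j, θ j = 1 → ∀ t : ℝ, t ≤ T →
    ∃ u : ℝ → ℝ, Measurable u ∧ (∀ s ∈ Set.Ico t T, ∃ j, u s = v j) ∧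
      ∀ H : ℝ → ℝ, IntegrableOn (fun s => H (u s)) (Set.Ico t T) volume ∧
        ∫ s in Set.Ico t T, H (u s) = (T - t) * ∑ j, θ j * H (v j) := by
  intro m
  induction m with
  | zero => intro θ v hθ hsum; simp at hsum
  | succ k ih =>
    intro θ v hθ hsum t ht
    set c := t + θ 0 * (T - t) with hc
    have hθ0 : θ 0 ≤ 1 := by
      have h := Finset.single_le_sum (f := θ) (fun j _ => hθ j) (Finset.mem_univ 0)
      linarith
    have htc : t ≤ c := by nlinarith [hθ 0]
    have hcT : c ≤ T := by nlinarith
    have htailsum : ∑ j : Fin k, θ j.succ = 1 - θ 0 := by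
      rw [Fin.sum_univ_succ] at hsum; linarith
    by_cases h1 : θ 0 = 1
    · have htail0 : ∀ j : Fin k, θ j.succ = 0 := by
        intro j
        have hz : ∑ j : Fin k, θ j.succ = 0 := by rw [htailsum, h1]; ring
        have := (Finset.sum_eq_zero_iff_of_nonneg (fun j _ => hθ j.succ)).1 hz j
          (Finset.mem_univ j)
        exact this
      refine ⟨fun _ => v 0, measurable_const, fun s _ => ⟨0, rfl⟩, fun H => ?_⟩
      have hvol : volume (Set.Ico t T) < ⊤ := by
        rw [Real.volume_Ico]; exact ENNReal.ofReal_lt_top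
      constructor
      · exact integrableOn_const hvol.ne
      · rw [setIntegral_const, measureReal_def, Real.volume_Ico, ENNReal.toReal_ofReal (by linarith),
          Fin.sum_univ_succ, h1]
        simp [htail0]
    · have hb : 0 < 1 - θ 0 := lt_of_le_of_ne (by linarith) (fun h => h1 (by linarith))
      set b := 1 - θ 0 with hbdef
      obtain ⟨u', hu'meas, hu'val, hu'int⟩ := ih (fun j => θ j.succ / b) (fun j => v j.succ)
        (fun j => div_nonneg (hθ j.succ) hb.le)
        (by rw [← Finset.sum_div, htailsum]; field_simp) c hcT
      refine ⟨fun s => if s < c then v 0 else u' s, ?_, ?_, ?_⟩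
      · exact Measurable.ite (measurableSet_lt measurable_id measurable_const)
          measurable_const hu'meas
      · intro s hs
        by_cases hsc : s < c
        · exact ⟨0, by simp [hsc]⟩
        · obtain ⟨j, hj⟩ := hu'val s ⟨not_lt.1 hsc, hs.2⟩
          exact ⟨j.succ, by simp [hsc, hj]⟩
      · intro H
        have hsplit : Set.Ico t T = Set.Ico t c ∪ Set.Ico c T :=
          (Set.Ico_union_Ico_eq_Ico htc hcT).symm
        have hdisj : Disjoint (Set.Ico t c) (Set.Ico c T) := by
          rw [Set.disjoint_left]; intro s hs1 hs2; exact absurd hs2.1 (not_le.2 hs1.2)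
        have heq1 : Set.EqOn (fun _ : ℝ => H (v 0)) (fun s => H (if s < c then v 0 else u' s))
            (Set.Ico t c) := by
          intro s hs; simp [hs.2]
        have heq2 : Set.EqOn (fun s => H (u' s)) (fun s => H (if s < c then v 0 else u' s))
            (Set.Ico c T) := by
          intro s hs; simp [not_lt.2 hs.1]
        have hint1 : IntegrableOn (fun s => H (if s < c then v 0 else u' s)) (Set.Ico t c)
            volume := by
          refine IntegrableOn.congr_fun ?_ heq1 measurableSet_Ico
          exact integrableOn_const (by rw [Real.volume_Ico]; exact ENNReal.ofReal_lt_top.ne)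
        have hint2 : IntegrableOn (fun s => H (if s < c then v 0 else u' s)) (Set.Ico c T)
            volume := IntegrableOn.congr_fun (hu'int H).1 heq2 measurableSet_Ico
        constructor
        · rw [hsplit]; exact hint1.union hint2
        · rw [hsplit, setIntegral_union hdisj measurableSet_Ico hint1 hint2]
          rw [← setIntegral_congr_fun measurableSet_Ico heq1,
            ← setIntegral_congr_fun measurableSet_Ico heq2]
          rw [setIntegral_const, measureReal_def, Real.volume_Ico, ENNReal.toReal_ofReal (by linarith),
            (hu'int H).2]
          have hcsub : c - t = θ 0 * (T - t) := by rw [hc]; ring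
          have hTc : T - c = b * (T - t) := by rw [hc, hbdef]; ring
          have hbs : b * ∑ j : Fin k, θ j.succ / b * H (v j.succ)
              = ∑ j : Fin k, θ j.succ * H (v j.succ) := by
            rw [Finset.mul_sum]
            exact Finset.sum_congr rfl fun j _ => by field_simp
          have htail : (T - c) * ∑ j : Fin k, θ j.succ / b * H (v j.succ)
              = (T - t) * ∑ j : Fin k, θ j.succ * H (v j.succ) := by
            rw [hTc, mul_comm b (T - t), mul_assoc, hbs]
          rw [hcsub, htail, Fin.sum_univ_succ]
          simp only [smul_eq_mul]
          ring


def comboSet (lam : ℝ → ℝ) (y : ℝ) : Set ℝ :=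
  {c | ∃ (m : ℕ) (θ v : Fin m → ℝ), (∀ j, 0 ≤ θ j) ∧ ∑ j, θ j = 1 ∧
    (∀ j, v j ∈ Set.Icc (0:ℝ) 1) ∧ ∑ j, θ j * lam (v j) = y ∧
    c = ∑ j, θ j * (lam (v j) * v j)}

lemma comboSet_bddAbove (lam : ℝ → ℝ) (B : ℝ)
    (hB : ∀ w ∈ Set.Icc (0:ℝ) 1, lam w * w ≤ B) (y : ℝ) :
    BddAbove (comboSet lam y) := by
  refine ⟨B, fun c hc => ?_⟩
  obtain ⟨m, θ, v, hθ, hsum, hv, -, hcval⟩ := hc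
  calc c = ∑ j, θ j * (lam (v j) * v j) := hcval
    _ ≤ ∑ j, θ j * B := Finset.sum_le_sum fun j _ =>
        mul_le_mul_of_nonneg_left (hB (v j) (hv j)) (hθ j)
    _ = B := by rw [← Finset.sum_mul, hsum, one_mul]

lemma comboSet_mem_single (lam : ℝ → ℝ) (w : ℝ) (hw : w ∈ Set.Icc (0:ℝ) 1) :
    lam w * w ∈ comboSet lam (lam w) := by
  exact ⟨1, fun _ => 1, fun _ => w, fun _ => zero_le_one, by simp, fun _ => hw, by simp, by simp⟩

lemma comboSet_combine (lam : ℝ → ℝ) {y₁ y₂ a b c₁ c₂ : ℝ}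
    (ha : 0 ≤ a) (hb : 0 ≤ b) (hab : a + b = 1)
    (h1 : c₁ ∈ comboSet lam y₁) (h2 : c₂ ∈ comboSet lam y₂) :
    a * c₁ + b * c₂ ∈ comboSet lam (a * y₁ + b * y₂) := by
  obtain ⟨m₁, θ₁, v₁, hθ₁, hsum₁, hv₁, hy₁, hc₁⟩ := h1
  obtain ⟨m₂, θ₂, v₂, hθ₂, hsum₂, hv₂, hy₂, hc₂⟩ := h2
  refine ⟨m₁ + m₂, Fin.append (fun j => a * θ₁ j) (fun j => b * θ₂ j), Fin.append v₁ v₂,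
    ?_, ?_, ?_, ?_, ?_⟩
  · intro j
    induction j using Fin.addCases with
    | left j => simpa using mul_nonneg ha (hθ₁ j)
    | right j => simpa using mul_nonneg hb (hθ₂ j)
  · rw [Fin.sum_univ_add]
    simp only [Fin.append_left, Fin.append_right]
    rw [← Finset.mul_sum, ← Finset.mul_sum, hsum₁, hsum₂]
    linarith
  · intro j
    induction j using Fin.addCases with
    | left j => simpa using hv₁ j
    | right j => simpa using hv₂ j
  · rw [Fin.sum_univ_add]
    simp only [Fin.append_left, Fin.append_right]
    have e1 : ∑ j, a * θ₁ j * lam (v₁ j) = a * ∑ j, θ₁ j * lam (v₁ j) := by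
      rw [Finset.mul_sum]; exact Finset.sum_congr rfl fun j _ => by ring
    have e2 : ∑ j, b * θ₂ j * lam (v₂ j) = b * ∑ j, θ₂ j * lam (v₂ j) := by
      rw [Finset.mul_sum]; exact Finset.sum_congr rfl fun j _ => by ring
    rw [e1, e2, hy₁, hy₂]
  · rw [Fin.sum_univ_add]
    simp only [Fin.append_left, Fin.append_right]
    have e1 : ∑ j, a * θ₁ j * (lam (v₁ j) * v₁ j) = a * ∑ j, θ₁ j * (lam (v₁ j) * v₁ j) := by
      rw [Finset.mul_sum]; exact Finset.sum_congr rfl fun j _ => by ring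
    have e2 : ∑ j, b * θ₂ j * (lam (v₂ j) * v₂ j) = b * ∑ j, θ₂ j * (lam (v₂ j) * v₂ j) := by
      rw [Finset.mul_sum]; exact Finset.sum_congr rfl fun j _ => by ring
    rw [e1, e2, ← hc₁, ← hc₂]

lemma comboSet_nonempty (lam : ℝ → ℝ) (hcont : ContinuousOn lam (Set.Icc 0 1))
    {y : ℝ} (hy : y ∈ Set.Icc (lam 1) (lam 0)) :
    ∃ w ∈ Set.Icc (0:ℝ) 1, lam w = y := by
  have := intermediate_value_Icc' (zero_le_one) hcont hy
  obtain ⟨w, hw, hwy⟩ := this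
  exact ⟨w, hw, hwy⟩

lemma comboSet_concaveOn (lam : ℝ → ℝ) (B : ℝ)
    (hB : ∀ w ∈ Set.Icc (0:ℝ) 1, lam w * w ≤ B)
    (hcont : ContinuousOn lam (Set.Icc 0 1)) :
    ConcaveOn ℝ (Set.Icc (lam 1) (lam 0)) (fun y => sSup (comboSet lam y)) := by
  refine ⟨convex_Icc _ _, ?_⟩
  intro y₁ hy₁ y₂ hy₂ a b ha hb hab
  simp only [smul_eq_mul]
  obtain ⟨w₁, hw₁, hwy₁⟩ := comboSet_nonempty lam hcont hy₁
  obtain ⟨w₂, hw₂, hwy₂⟩ := comboSet_nonempty lam hcont hy₂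
  have hne₁ : (comboSet lam y₁).Nonempty := ⟨_, hwy₁ ▸ comboSet_mem_single lam w₁ hw₁⟩
  have hne₂ : (comboSet lam y₂).Nonempty := ⟨_, hwy₂ ▸ comboSet_mem_single lam w₂ hw₂⟩
  rcases eq_or_lt_of_le ha with ha0 | ha0
  · have hb1 : b = 1 := by linarith
    simp [← ha0, hb1]
  rcases eq_or_lt_of_le hb with hb0 | hb0
  · have ha1 : a = 1 := by linarith
    simp [← hb0, ha1]
  have key : ∀ c₁ ∈ comboSet lam y₁, ∀ c₂ ∈ comboSet lam y₂,
      a * c₁ + b * c₂ ≤ sSup (comboSet lam (a * y₁ + b * y₂)) := by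
    intro c₁ hc₁ c₂ hc₂
    exact le_csSup (comboSet_bddAbove lam B hB _)
      (comboSet_combine lam ha hb hab hc₁ hc₂)
  have step1 : ∀ c₁ ∈ comboSet lam y₁,
      a * c₁ + b * sSup (comboSet lam y₂) ≤ sSup (comboSet lam (a * y₁ + b * y₂)) := by
    intro c₁ hc₁
    have : sSup (comboSet lam y₂) ≤ (sSup (comboSet lam (a * y₁ + b * y₂)) - a * c₁) / b :=
      csSup_le hne₂ fun c₂ hc₂ => (le_div_iff₀ hb0).2 (by linarith [key c₁ hc₁ c₂ hc₂])
    have := mul_le_mul_of_nonneg_left this hb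
    rw [mul_div_cancel₀ _ (ne_of_gt hb0)] at this
    linarith
  have : sSup (comboSet lam y₁) ≤
      (sSup (comboSet lam (a * y₁ + b * y₂)) - b * sSup (comboSet lam y₂)) / a :=
    csSup_le hne₁ fun c₁ hc₁ => (le_div_iff₀ ha0).2 (by linarith [step1 c₁ hc₁])
  have h := mul_le_mul_of_nonneg_left this ha
  rw [mul_div_cancel₀ _ (ne_of_gt ha0)] at h
  linarith

lemma abs_simple_le {Ω : Type*} (n : ℕ) (A : Fin n → Set Ω)
    (x C : ℝ) (q d : Fin n → ℝ) (ω : Ω) :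
    |x - ∑ i, q i * (A i).indicator (fun _ => (1:ℝ)) ω + C
      - ∑ i, d i * (A i).indicator (fun _ => (1:ℝ)) ω|
    ≤ |x| + ∑ i, |q i| + |C| + ∑ i, |d i| := by
  have hχabs : ∀ (i : Fin n), |(A i).indicator (fun _ => (1:ℝ)) ω| ≤ 1 := by
    intro i
    by_cases h : ω ∈ A i
    · rw [Set.indicator_of_mem h]; norm_num
    · rw [Set.indicator_of_notMem h]; norm_num
  have h1 : |∑ i, q i * (A i).indicator (fun _ => (1:ℝ)) ω| ≤ ∑ i, |q i| := by
    refine (Finset.abs_sum_le_sum_abs _ _).trans (Finset.sum_le_sum fun i _ => ?_)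
    rw [abs_mul]
    exact mul_le_of_le_one_right (abs_nonneg _) (hχabs i)
  have h2 : |∑ i, d i * (A i).indicator (fun _ => (1:ℝ)) ω| ≤ ∑ i, |d i| := by
    refine (Finset.abs_sum_le_sum_abs _ _).trans (Finset.sum_le_sum fun i _ => ?_)
    rw [abs_mul]
    exact mul_le_of_le_one_right (abs_nonneg _) (hχabs i)
  obtain ⟨e1, e1'⟩ := abs_le.1 h1
  obtain ⟨e2, e2'⟩ := abs_le.1 h2
  rw [abs_le]
  constructor <;> [skip; skip] <;>
    linarith [le_abs_self x, neg_abs_le x, le_abs_self C, neg_abs_le C]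

lemma integrable_U_simple {Ω : Type*} [MeasurableSpace Ω] (μ : Measure Ω)
    [IsProbabilityMeasure μ]
    (U : ℝ → ℝ) (hU : Continuous U) (hUm : Monotone U)
    (n : ℕ) (A : Fin n → Set Ω) (hA : ∀ i, MeasurableSet (A i))
    (x C : ℝ) (q d : Fin n → ℝ) :
    Integrable (fun ω => U (x - ∑ i, q i * (A i).indicator (fun _ => (1:ℝ)) ω + C
      - ∑ i, d i * (A i).indicator (fun _ => (1:ℝ)) ω)) μ := by
  set Y : Ω → ℝ := fun ω => x - ∑ i, q i * (A i).indicator (fun _ => (1:ℝ)) ω + C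
      - ∑ i, d i * (A i).indicator (fun _ => (1:ℝ)) ω with hY
  have hYmeas : Measurable Y := by
    apply Measurable.sub
    · apply Measurable.add
      · apply Measurable.sub measurable_const
        exact Finset.measurable_sum _ fun i _ =>
          (measurable_const.indicator (hA i)).const_mul (q i)
      · exact measurable_const
    · exact Finset.measurable_sum _ fun i _ =>
        (measurable_const.indicator (hA i)).const_mul (d i)
  set K : ℝ := |x| + ∑ i, |q i| + |C| + ∑ i, |d i| with hK
  have hYbd : ∀ ω, |Y ω| ≤ K := fun ω => abs_simple_le n A x C q d ω
  have hUbd : ∀ ω, ‖U (Y ω)‖ ≤ max |U K| |U (-K)| := by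
    intro ω
    obtain ⟨e1, e2⟩ := abs_le.1 (hYbd ω)
    have hu1 : U (Y ω) ≤ U K := hUm e2
    have hu2 : U (-K) ≤ U (Y ω) := hUm e1
    rw [Real.norm_eq_abs, abs_le]
    constructor
    · calc -max |U K| |U (-K)| ≤ -|U (-K)| := neg_le_neg (le_max_right _ _)
        _ ≤ U (-K) := neg_abs_le _
        _ ≤ U (Y ω) := hu2
    · calc U (Y ω) ≤ U K := hu1
        _ ≤ |U K| := le_abs_self _
        _ ≤ max |U K| |U (-K)| := le_max_left _ _
  exact Integrable.mono' (integrable_const _)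
    ((hU.measurable.comp hYmeas).aestronglyMeasurable) (Filter.Eventually.of_forall hUbd)


/-- Semi-static betting: the value of the dynamic problem dominates the static envelope
problem. -/
theorem stmt1
    {Ω : Type*} [MeasurableSpace Ω] (μ : Measure Ω) [IsProbabilityMeasure μ]
    (n : ℕ) (A : Fin n → Set Ω) (hA : ∀ i, MeasurableSet (A i))
    (t T : ℝ) (htT : t < T) (x : ℝ) (q : Fin n → ℝ) (hq : ∀ i, 0 ≤ q i)
    (lam : Fin n → ℝ → ℝ)
    (hlam_cont : ∀ i, ContinuousOn (lam i) (Icc 0 1))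
    (hlam_anti : ∀ i, StrictAntiOn (lam i) (Icc 0 1))
    (hlam_nonneg : ∀ i, ∀ u ∈ Icc (0:ℝ) 1, 0 ≤ lam i u)
    (laminv : Fin n → ℝ → ℝ)
    (hlaminv : ∀ i, ∀ u ∈ Icc (0:ℝ) 1, laminv i (lam i u) = u)
    (fhat : Fin n → ℝ → ℝ)
    (hfhat_conc : ∀ i, ConcaveOn ℝ (Icc (lam i 1) (lam i 0)) (fhat i))
    (hfhat_ge : ∀ i, ∀ y ∈ Icc (lam i 1) (lam i 0), y * laminv i y ≤ fhat i y)
    (hfhat_min : ∀ i, ∀ g : ℝ → ℝ, ConcaveOn ℝ (Icc (lam i 1) (lam i 0)) g →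
      (∀ y ∈ Icc (lam i 1) (lam i 0), y * laminv i y ≤ g y) →
      ∀ y ∈ Icc (lam i 1) (lam i 0), fhat i y ≤ g y)
    (U : ℝ → ℝ) (hU_cont : Continuous U) (hU_mono : StrictMono U) :
    sSup { r : ℝ | ∃ u : ℝ → Fin n → ℝ, Measurable u ∧
        (∀ s ∈ Ico t T, ∀ i, u s i ∈ Icc (0:ℝ) 1) ∧
        r = ∫ ω, U (x - ∑ i, q i * (A i).indicator (fun _ => (1:ℝ)) ω
              + ∑ i, ∫ s in Ico t T, lam i (u s i) * u s i
              - ∑ i, (∫ s in Ico t T, lam i (u s i)) *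
                  (A i).indicator (fun _ => (1:ℝ)) ω) ∂μ }
    ≥ sSup { r : ℝ | ∃ uhat : Fin n → ℝ, (∀ i, uhat i ∈ Icc (0:ℝ) 1) ∧
        r = ∫ ω, U (x - ∑ i, q i * (A i).indicator (fun _ => (1:ℝ)) ω
              + ∑ i, ∫ _s in Ico t T, fhat i (lam i (uhat i))
              - ∑ i, (∫ _s in Ico t T, lam i (uhat i)) *
                  (A i).indicator (fun _ => (1:ℝ)) ω) ∂μ } := by
  have hTt : (0:ℝ) < T - t := sub_pos.2 htT
  have hUm : Monotone U := hU_mono.monotone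
  have hχ01 : ∀ (i : Fin n) (ω : Ω), 0 ≤ (A i).indicator (fun _ => (1:ℝ)) ω ∧
      (A i).indicator (fun _ => (1:ℝ)) ω ≤ 1 := by
    intro i ω
    by_cases h : ω ∈ A i
    · rw [Set.indicator_of_mem h]; norm_num
    · rw [Set.indicator_of_notMem h]; norm_num
  have hlam00 : ∀ i, 0 ≤ lam i 0 := fun i =>
    hlam_nonneg i 0 (Set.left_mem_Icc.2 zero_le_one)
  have hlamle : ∀ i, ∀ w ∈ Set.Icc (0:ℝ) 1, lam i w ≤ lam i 0 := by
    intro i w hw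
    rcases eq_or_lt_of_le hw.1 with h0 | h0
    · rw [← h0]
    · exact le_of_lt ((hlam_anti i) (Set.left_mem_Icc.2 zero_le_one) hw h0)
  have hB : ∀ i, ∀ w ∈ Set.Icc (0:ℝ) 1, lam i w * w ≤ lam i 0 := by
    intro i w hw
    calc lam i w * w ≤ lam i w * 1 :=
          mul_le_mul_of_nonneg_left hw.2 (hlam_nonneg i w hw)
      _ = lam i w := mul_one _
      _ ≤ lam i 0 := hlamle i w hw
  have hvolfin : volume (Ico t T) < ⊤ := by
    rw [Real.volume_Ico]; exact ENNReal.ofReal_lt_top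
  have hconstint : ∀ c : ℝ, (∫ _s in Ico t T, c) = (T - t) * c := by
    intro c
    rw [setIntegral_const, measureReal_def, Real.volume_Ico, ENNReal.toReal_ofReal hTt.le, smul_eq_mul]
  -- Boundedness of the dynamic value set
  set M : ℝ := x + ∑ i, (T - t) * lam i 0 with hM
  have hSbdd : BddAbove { r : ℝ | ∃ u : ℝ → Fin n → ℝ, Measurable u ∧
      (∀ s ∈ Ico t T, ∀ i, u s i ∈ Icc (0:ℝ) 1) ∧
      r = ∫ ω, U (x - ∑ i, q i * (A i).indicator (fun _ => (1:ℝ)) ω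
            + ∑ i, ∫ s in Ico t T, lam i (u s i) * u s i
            - ∑ i, (∫ s in Ico t T, lam i (u s i)) *
                (A i).indicator (fun _ => (1:ℝ)) ω) ∂μ } := by
    refine ⟨U M, ?_⟩
    rintro r ⟨u, humeas, hu01, rfl⟩
    have hb_i : ∀ i, 0 ≤ ∫ s in Ico t T, lam i (u s i) := fun i =>
      setIntegral_nonneg measurableSet_Ico fun s hs => hlam_nonneg i _ (hu01 s hs i)
    have hsplitI : ∀ i, ∃ e b' : ℝ, 0 ≤ b' ∧
        (∀ w : ℝ, (∫ s in Ico t T, (lam i (u s i) * u s i - w)) = e - b' * w) ∧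
        (∀ w : ℝ, 0 ≤ w → e - b' * w ≤ (T - t) * lam i 0) := by
      intro i
      by_cases hI : IntegrableOn (fun s => lam i (u s i) * u s i) (Ico t T) volume
      · refine ⟨∫ s in Ico t T, lam i (u s i) * u s i, T - t, hTt.le, ?_, ?_⟩
        · intro w
          rw [integral_sub hI (integrableOn_const hvolfin.ne), hconstint]
        · intro w hw
          have h1 : (∫ s in Ico t T, lam i (u s i) * u s i) ≤ (T - t) * lam i 0 := by
            calc (∫ s in Ico t T, lam i (u s i) * u s i)
                ≤ ∫ _s in Ico t T, lam i 0 :=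
                  setIntegral_mono_on hI (integrableOn_const hvolfin.ne)
                    measurableSet_Ico (fun s hs => hB i _ (hu01 s hs i))
              _ = (T - t) * lam i 0 := hconstint _
          nlinarith [mul_nonneg hTt.le hw]
      · refine ⟨0, 0, le_refl 0, ?_, ?_⟩
        · intro w
          have hni : ¬ IntegrableOn (fun s => lam i (u s i) * u s i - w) (Ico t T) volume := by
            intro hcon
            apply hI
            have h3 := hcon.add (integrableOn_const hvolfin.ne :
              IntegrableOn (fun _ => w) (Ico t T) volume)
            have h4 : ((fun s => lam i (u s i) * u s i - w) + fun _ => w)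
                = fun s => lam i (u s i) * u s i := by funext s; simp
            exact h4 ▸ h3
          rw [integral_undef hni]; ring
        · intro w hw
          have := mul_nonneg hTt.le (hlam00 i)
          norm_num
          linarith
    choose e b' hb'0 heqw hlew using hsplitI
    have hexpr : (fun ω => U (x - ∑ i, q i * (A i).indicator (fun _ => (1:ℝ)) ω
          + ∑ i, ∫ s in Ico t T, lam i (u s i) * u s i
          - ∑ i, (∫ s in Ico t T, lam i (u s i)) *
              (A i).indicator (fun _ => (1:ℝ)) ω))
        = fun ω => U (x - ∑ i, q i * (A i).indicator (fun _ => (1:ℝ)) ω + (∑ i, e i)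
          - ∑ i, ((∑ i', b' i') * (∫ s in Ico t T, lam i (u s i))) *
              (A i).indicator (fun _ => (1:ℝ)) ω) := by
      funext ω
      congr 1
      set Wt : ℝ := ∑ i, (∫ s in Ico t T, lam i (u s i)) *
        (A i).indicator (fun _ => (1:ℝ)) ω with hWt
      have h1 : (∑ i, ∫ s in Ico t T, (lam i (u s i) * u s i - Wt))
          = ∑ i, (e i - b' i * Wt) := Finset.sum_congr rfl fun i _ => heqw i _
      rw [h1, Finset.sum_sub_distrib, ← Finset.sum_mul]
      have h2 : (∑ i, ((∑ i', b' i') * (∫ s in Ico t T, lam i (u s i))) *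
          (A i).indicator (fun _ => (1:ℝ)) ω) = (∑ i', b' i') * Wt := by
        rw [hWt, Finset.mul_sum]
        exact Finset.sum_congr rfl fun i _ => by ring
      rw [h2]
      ring
    rw [hexpr]
    have hint := integrable_U_simple μ U hU_cont hUm n A hA x (∑ i, e i) q
      (fun i => (∑ i', b' i') * (∫ s in Ico t T, lam i (u s i)))
    have harg : ∀ ω, (x - ∑ i, q i * (A i).indicator (fun _ => (1:ℝ)) ω + (∑ i, e i)
        - ∑ i, ((∑ i', b' i') * (∫ s in Ico t T, lam i (u s i))) *
            (A i).indicator (fun _ => (1:ℝ)) ω) ≤ M := by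
      intro ω
      have hq0 : 0 ≤ ∑ i, q i * (A i).indicator (fun _ => (1:ℝ)) ω :=
        Finset.sum_nonneg fun i _ => mul_nonneg (hq i) (hχ01 i ω).1
      have hd0 : 0 ≤ ∑ i, ((∑ i', b' i') * (∫ s in Ico t T, lam i (u s i))) *
          (A i).indicator (fun _ => (1:ℝ)) ω :=
        Finset.sum_nonneg fun i _ => mul_nonneg
          (mul_nonneg (Finset.sum_nonneg fun i' _ => hb'0 i') (hb_i i)) (hχ01 i ω).1
      have hsum : (∑ i, e i) ≤ ∑ i, (T - t) * lam i 0 :=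
        Finset.sum_le_sum fun i _ => by
          have := hlew i 0 (le_refl 0)
          simpa using this
      rw [hM]; linarith
    calc (∫ ω, U (x - ∑ i, q i * (A i).indicator (fun _ => (1:ℝ)) ω + (∑ i, e i)
          - ∑ i, ((∑ i', b' i') * (∫ s in Ico t T, lam i (u s i))) *
              (A i).indicator (fun _ => (1:ℝ)) ω) ∂μ)
        ≤ ∫ _ω, U M ∂μ :=
          integral_mono hint (integrable_const _) (fun ω => hUm (harg ω))
      _ = U M := by simp
  rw [ge_iff_le]
  refine csSup_le ⟨_, ⟨fun _ => 0, fun i => ⟨le_refl 0, zero_le_one⟩, rfl⟩⟩ ?_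
  rintro r ⟨uhat, huhat, rfl⟩
  refine le_of_forall_pos_le_add ?_
  intro δ hδ
  have hymem : ∀ i, lam i (uhat i) ∈ Set.Icc (lam i 1) (lam i 0) := by
    intro i
    constructor
    · rcases eq_or_lt_of_le (huhat i).2 with h1 | h1
      · rw [h1]
      · exact le_of_lt ((hlam_anti i) (huhat i) (Set.right_mem_Icc.2 zero_le_one) h1)
    · exact hlamle i _ (huhat i)
  have hg : ∀ i, fhat i (lam i (uhat i)) ≤ sSup (comboSet (lam i) (lam i (uhat i))) := by
    intro i
    refine hfhat_min i (fun yy => sSup (comboSet (lam i) yy))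
      (comboSet_concaveOn (lam i) (lam i 0) (hB i) (hlam_cont i)) ?_ _ (hymem i)
    intro yy hyy
    obtain ⟨w, hw, hwy⟩ := comboSet_nonempty (lam i) (hlam_cont i) hyy
    have heq : yy * laminv i yy = lam i w * w := by rw [← hwy, hlaminv i w hw]
    rw [heq]
    exact le_csSup (comboSet_bddAbove _ _ (hB i) _)
      (hwy ▸ comboSet_mem_single (lam i) w hw)
  -- constants for the static problem
  set Chat : ℝ := ∑ i, (T - t) * fhat i (lam i (uhat i)) with hChat
  set dd : Fin n → ℝ :=
    fun i => (n : ℝ) * ((T - t) * ((T - t) * lam i (uhat i))) with hdd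
  set K : ℝ := |x| + ∑ i, |q i| + |Chat| + ∑ i, |dd i| with hK
  have hK0 : 0 ≤ K := by
    have h1 : (0:ℝ) ≤ ∑ i, |q i| := Finset.sum_nonneg fun i _ => abs_nonneg _
    have h2 : (0:ℝ) ≤ ∑ i, |dd i| := Finset.sum_nonneg fun i _ => abs_nonneg _
    rw [hK]
    positivity
  -- uniform continuity of U on a compact interval
  have hUC : UniformContinuousOn U (Set.Icc (-(K+1)) (K+1)) :=
    (isCompact_Icc).uniformContinuousOn_of_continuous hU_cont.continuousOn
  obtain ⟨η₀, hη₀, hball⟩ := Metric.uniformContinuousOn_iff.1 hUC δ hδ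
  set η : ℝ := min (η₀ / 2) 1 with hηdef
  have hη : 0 < η := lt_min (by linarith) one_pos
  have hη1 : η ≤ 1 := min_le_right _ _
  have hUstep : ∀ a, |a| ≤ K → U a - δ ≤ U (a - η) := by
    intro a ha
    obtain ⟨ha1, ha2⟩ := abs_le.1 ha
    have hmem1 : a ∈ Set.Icc (-(K+1)) (K+1) := ⟨by linarith, by linarith⟩
    have hmem2 : a - η ∈ Set.Icc (-(K+1)) (K+1) := ⟨by linarith, by linarith⟩
    have hdist : dist a (a - η) < η₀ := by
      rw [Real.dist_eq]
      have he : a - (a - η) = η := by ring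
      rw [he, abs_of_pos hη]
      calc η ≤ η₀ / 2 := min_le_left _ _
        _ < η₀ := by linarith
    have hb := hball a hmem1 (a - η) hmem2 hdist
    rw [Real.dist_eq] at hb
    have := (abs_lt.1 hb).2
    linarith
  set ε : ℝ := η / ((T - t) * (n + 1)) with hεdef
  have hε : 0 < ε := div_pos hη (by positivity)
  have hnε : (n : ℝ) * ((T - t) * ε) ≤ η := by
    rw [hεdef]
    have h1 : (n : ℝ) * ((T - t) * (η / ((T - t) * (↑n + 1)))) =
        η * ((n : ℝ) / (n + 1)) := by
      field_simp
    rw [h1]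
    have h2 : (n : ℝ) / (n + 1) ≤ 1 := by
      rw [div_le_one (by positivity)]
      linarith
    calc η * ((n : ℝ) / (n + 1)) ≤ η * 1 := mul_le_mul_of_nonneg_left h2 hη.le
      _ = η := mul_one _
  -- choose near-optimal combinations
  have hcombo : ∀ i, ∃ c ∈ comboSet (lam i) (lam i (uhat i)),
      fhat i (lam i (uhat i)) - ε < c := by
    intro i
    obtain ⟨w, hw, hwy⟩ := comboSet_nonempty (lam i) (hlam_cont i) (hymem i)
    have hne : (comboSet (lam i) (lam i (uhat i))).Nonempty :=
      ⟨_, hwy ▸ comboSet_mem_single (lam i) w hw⟩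
    exact exists_lt_of_lt_csSup hne (lt_of_lt_of_le (by linarith) (hg i))
  choose cc hccmem hcclt using hcombo
  simp only [comboSet, Set.mem_setOf_eq] at hccmem
  choose m θ v hθ hθsum hv hyeq hceq using hccmem
  -- build the dynamic strategy
  have hstrat := fun i => combo_exists T (m i) (θ i) (v i) (hθ i) (hθsum i) t htT.le
  choose uu huumeas huuval huuint using hstrat
  set u : ℝ → Fin n → ℝ := fun s i => uu i s with hu
  have humeas : Measurable u := measurable_pi_lambda _ fun i => huumeas i
  have hu01 : ∀ s ∈ Ico t T, ∀ i, u s i ∈ Icc (0:ℝ) 1 := by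
    intro s hs i
    obtain ⟨j, hj⟩ := huuval i s hs
    show uu i s ∈ Icc (0:ℝ) 1
    rw [hj]; exact hv i j
  have hIl : ∀ i, (∫ s in Ico t T, lam i (u s i)) = (T - t) * lam i (uhat i) := by
    intro i
    have h := (huuint i (lam i)).2
    rw [← hyeq i]
    simp only [hu]
    exact h
  have hIf : ∀ i, (∫ s in Ico t T, lam i (u s i) * u s i) = (T - t) * cc i := by
    intro i
    have h := (huuint i (fun w => lam i w * w)).2
    rw [hceq i]
    simp only [hu]
    exact h
  have hIntuu : ∀ i, IntegrableOn (fun s => lam i (u s i) * u s i) (Ico t T) volume := by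
    intro i
    simp only [hu]
    exact (huuint i (fun w => lam i w * w)).1
  set Cdyn : ℝ := ∑ i, (T - t) * cc i with hCdyn
  -- rewrite the static value
  have hstatic : (fun ω => U (x - ∑ i, q i * (A i).indicator (fun _ => (1:ℝ)) ω
        + ∑ i, ∫ _s in Ico t T, fhat i (lam i (uhat i))
        - ∑ i, (∫ _s in Ico t T, lam i (uhat i)) *
            (A i).indicator (fun _ => (1:ℝ)) ω))
      = fun ω => U (x - ∑ i, q i * (A i).indicator (fun _ => (1:ℝ)) ω + Chat
        - ∑ i, dd i * (A i).indicator (fun _ => (1:ℝ)) ω) := by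
    funext ω
    congr 1
    have hWhat : (∑ i, (∫ _s in Ico t T, lam i (uhat i)) *
        (A i).indicator (fun _ => (1:ℝ)) ω)
        = ∑ i, ((T - t) * lam i (uhat i)) * (A i).indicator (fun _ => (1:ℝ)) ω :=
      Finset.sum_congr rfl fun i _ => by rw [hconstint]
    set Wt : ℝ := ∑ i, ((T - t) * lam i (uhat i)) *
      (A i).indicator (fun _ => (1:ℝ)) ω with hWt
    rw [hWhat]
    have h1 : (∑ i, ∫ _s in Ico t T, (fhat i (lam i (uhat i)) - Wt))
        = ∑ i, ((T - t) * fhat i (lam i (uhat i)) - (T - t) * Wt) :=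
      Finset.sum_congr rfl fun i _ => by rw [hconstint _]; ring
    rw [h1, Finset.sum_sub_distrib, Finset.sum_const, Finset.card_univ,
      Fintype.card_fin, nsmul_eq_mul]
    have h2 : (∑ i, dd i * (A i).indicator (fun _ => (1:ℝ)) ω)
        = (n : ℝ) * ((T - t) * Wt) := by
      rw [hWt, Finset.mul_sum, Finset.mul_sum]
      exact Finset.sum_congr rfl fun i _ => by rw [hdd]; ring
    rw [h2, hChat]
    ring
  -- rewrite the dynamic value for our strategy
  have hdyn : (fun ω => U (x - ∑ i, q i * (A i).indicator (fun _ => (1:ℝ)) ω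
        + ∑ i, ∫ s in Ico t T, lam i (u s i) * u s i
        - ∑ i, (∫ s in Ico t T, lam i (u s i)) * (A i).indicator (fun _ => (1:ℝ)) ω))
      = fun ω => U (x - ∑ i, q i * (A i).indicator (fun _ => (1:ℝ)) ω + Cdyn
        - ∑ i, dd i * (A i).indicator (fun _ => (1:ℝ)) ω) := by
    funext ω
    congr 1
    have hW : (∑ i, (∫ s in Ico t T, lam i (u s i)) *
        (A i).indicator (fun _ => (1:ℝ)) ω)
        = ∑ i, ((T - t) * lam i (uhat i)) * (A i).indicator (fun _ => (1:ℝ)) ω :=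
      Finset.sum_congr rfl fun i _ => by rw [hIl i]
    set Wt : ℝ := ∑ i, ((T - t) * lam i (uhat i)) *
      (A i).indicator (fun _ => (1:ℝ)) ω with hWt
    rw [hW]
    have h1 : (∑ i, ∫ s in Ico t T, (lam i (u s i) * u s i - Wt))
        = ∑ i, ((T - t) * cc i - (T - t) * Wt) := by
      refine Finset.sum_congr rfl fun i _ => ?_
      rw [integral_sub (hIntuu i) (integrableOn_const hvolfin.ne),
        hIf i, hconstint]
    rw [h1, Finset.sum_sub_distrib, Finset.sum_const, Finset.card_univ,
      Fintype.card_fin, nsmul_eq_mul]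
    have h2 : (∑ i, dd i * (A i).indicator (fun _ => (1:ℝ)) ω)
        = (n : ℝ) * ((T - t) * Wt) := by
      rw [hWt, Finset.mul_sum, Finset.mul_sum]
      exact Finset.sum_congr rfl fun i _ => by rw [hdd]; ring
    rw [h2, hCdyn]
    ring
  rw [hstatic]
  -- integrabilities
  have hIntYhat := integrable_U_simple μ U hU_cont hUm n A hA x Chat q dd
  have hIntY := integrable_U_simple μ U hU_cont hUm n A hA x Cdyn q dd
  -- pointwise comparison
  have hCle : Chat - η ≤ Cdyn := by
    have hterm : ∀ i ∈ Finset.univ, (T - t) * fhat i (lam i (uhat i)) - (T - t) * ε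
        ≤ (T - t) * cc i := by
      intro i _
      have := hcclt i
      nlinarith [hTt]
    have hs := Finset.sum_le_sum hterm
    rw [Finset.sum_sub_distrib, Finset.sum_const, Finset.card_univ,
      Fintype.card_fin, nsmul_eq_mul] at hs
    rw [hChat, hCdyn]
    have : (n : ℝ) * ((T - t) * ε) ≤ η := hnε
    linarith
  have hpt : ∀ ω, U (x - ∑ i, q i * (A i).indicator (fun _ => (1:ℝ)) ω + Chat
      - ∑ i, dd i * (A i).indicator (fun _ => (1:ℝ)) ω) - δ
      ≤ U (x - ∑ i, q i * (A i).indicator (fun _ => (1:ℝ)) ω + Cdyn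
        - ∑ i, dd i * (A i).indicator (fun _ => (1:ℝ)) ω) := by
    intro ω
    have habs : |x - ∑ i, q i * (A i).indicator (fun _ => (1:ℝ)) ω + Chat
        - ∑ i, dd i * (A i).indicator (fun _ => (1:ℝ)) ω| ≤ K :=
      abs_simple_le n A x Chat q dd ω
    calc U (x - ∑ i, q i * (A i).indicator (fun _ => (1:ℝ)) ω + Chat
          - ∑ i, dd i * (A i).indicator (fun _ => (1:ℝ)) ω) - δ
        ≤ U (x - ∑ i, q i * (A i).indicator (fun _ => (1:ℝ)) ω + Chat
          - (∑ i, dd i * (A i).indicator (fun _ => (1:ℝ)) ω) - η) := hUstep _ habs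
      _ ≤ _ := hUm (by linarith [hCle])
  -- integrate the pointwise comparison and conclude
  have hintle : (∫ ω, U (x - ∑ i, q i * (A i).indicator (fun _ => (1:ℝ)) ω + Chat
      - ∑ i, dd i * (A i).indicator (fun _ => (1:ℝ)) ω) ∂μ)
      ≤ (∫ ω, U (x - ∑ i, q i * (A i).indicator (fun _ => (1:ℝ)) ω + Cdyn
        - ∑ i, dd i * (A i).indicator (fun _ => (1:ℝ)) ω) ∂μ) + δ := by
    have h1 : (∫ ω, U (x - ∑ i, q i * (A i).indicator (fun _ => (1:ℝ)) ω + Chat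
        - ∑ i, dd i * (A i).indicator (fun _ => (1:ℝ)) ω) ∂μ)
        ≤ ∫ ω, (U (x - ∑ i, q i * (A i).indicator (fun _ => (1:ℝ)) ω + Cdyn
          - ∑ i, dd i * (A i).indicator (fun _ => (1:ℝ)) ω) + δ) ∂μ :=
      integral_mono hIntYhat (hIntY.add (integrable_const _))
        (fun ω => by linarith [hpt ω])
    rw [integral_add hIntY (integrable_const _), integral_const] at h1
    simpa using h1
  refine le_trans hintle (add_le_add ?_ le_rfl)
  refine le_csSup hSbdd ⟨u, humeas, hu01, ?_⟩
  rw [hdyn]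
end

section
/- Suppose û* = (û*_1,…,û*_n) ∈ (0,1)^n is a maximizer over (0,1)^n of the static exponential-utility objective Ĵ(û) := −e^{−γx} · exp(−γ(T−t)·Σ_{j=1}^n (p_j/(1−p_j))(1−û_j)) · Σ_{i=1}^n p_i · exp(γ q_i + γ(T−t)(p_i/(1−p_i))(1/û_i − 1)). Then for every i ∈ {1,…,n}: p_i·(1/(û*_i)² − 1)·g(t,p_i,q_i;û*_i) = Σ_{j≠i} p_j·g(t,p_j,q_j;û*_j), where g(t,p_i,q_i;u_i) := exp( γ q_i + γ(T−t)(p_i/(1−p_i))(1/u_i − 1) ). -/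
open Finset

private lemma sum_update_split {n : ℕ} (i : Fin n) (f : Fin n → ℝ) (s : ℝ)
    (F : Fin n → ℝ → ℝ) :
    ∑ j, F j (Function.update f i s j)
      = F i s + ∑ j ∈ Finset.univ.erase i, F j (f j) := by
  rw [← Finset.add_sum_erase Finset.univ (fun j => F j (Function.update f i s j))
    (Finset.mem_univ i)]
  congr 1
  · simp
  · exact Finset.sum_congr rfl fun j hj => by
      rw [Function.update_of_ne (Finset.ne_of_mem_erase hj)]

/-- First-order condition for the static exponential-utility optimizer when the outcome
sets form a partition. -/
theorem stmt3 (n : ℕ) (hn : 2 ≤ n) (t T γ x : ℝ) (htT : t < T) (hγ : 0 < γ)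
    (q : Fin n → ℝ) (hq : ∀ i, 0 ≤ q i)
    (p : Fin n → ℝ) (hp : ∀ i, p i ∈ Set.Ioo (0:ℝ) 1) (hpsum : ∑ i, p i = 1)
    (ustar : Fin n → ℝ) (hustar : ∀ i, ustar i ∈ Set.Ioo (0:ℝ) 1)
    (J : (Fin n → ℝ) → ℝ)
    (hJ : ∀ u : Fin n → ℝ, J u =
      -Real.exp (-γ * x) *
        Real.exp (-γ * (T - t) * ∑ j, p j / (1 - p j) * (1 - u j)) *
        ∑ i, p i * Real.exp (γ * q i + γ * (T - t) * (p i / (1 - p i)) * (1 / u i - 1)))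
    (hmax : ∀ u : Fin n → ℝ, (∀ i, u i ∈ Set.Ioo (0:ℝ) 1) → J u ≤ J ustar) :
    ∀ i, p i * (1 / (ustar i) ^ 2 - 1) *
        Real.exp (γ * q i + γ * (T - t) * (p i / (1 - p i)) * (1 / ustar i - 1))
      = ∑ j ∈ Finset.univ.erase i,
          p j * Real.exp (γ * q j + γ * (T - t) * (p j / (1 - p j)) * (1 / ustar j - 1)) := by
  intro i
  obtain ⟨hp0, hp1⟩ := hp i
  obtain ⟨hu0, hu1⟩ := hustar i
  have hune : ustar i ≠ 0 := ne_of_gt hu0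
  set C : ℝ := ∑ j ∈ Finset.univ.erase i, p j / (1 - p j) * (1 - ustar j) with hC
  set S : ℝ := ∑ j ∈ Finset.univ.erase i,
      p j * Real.exp (γ * q j + γ * (T - t) * (p j / (1 - p j)) * (1 / ustar j - 1)) with hS
  have hφF : ∀ s : ℝ, J (Function.update ustar i s)
      = -Real.exp (-γ * x) *
          (Real.exp (-γ * (T - t) * (p i / (1 - p i) * (1 - s) + C)) *
            (p i * Real.exp (γ * q i + γ * (T - t) * (p i / (1 - p i)) * (1 / s - 1)) + S)) := by
    intro s
    have hsum1 : (∑ j, p j / (1 - p j) * (1 - Function.update ustar i s j))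
        = p i / (1 - p i) * (1 - s) + C :=
      sum_update_split i ustar s (fun j y => p j / (1 - p j) * (1 - y))
    have hsum2 : (∑ j, p j * Real.exp (γ * q j + γ * (T - t) * (p j / (1 - p j)) *
          (1 / Function.update ustar i s j - 1)))
        = p i * Real.exp (γ * q i + γ * (T - t) * (p i / (1 - p i)) * (1 / s - 1)) + S :=
      sum_update_split i ustar s
        (fun j y => p j * Real.exp (γ * q j + γ * (T - t) * (p j / (1 - p j)) * (1 / y - 1)))
    rw [hJ, hsum1, hsum2]
    ring
  have hloc : IsLocalMax (fun s : ℝ => -Real.exp (-γ * x) *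
      (Real.exp (-γ * (T - t) * (p i / (1 - p i) * (1 - s) + C)) *
        (p i * Real.exp (γ * q i + γ * (T - t) * (p i / (1 - p i)) * (1 / s - 1)) + S)))
      (ustar i) := by
    have hmem : Set.Ioo (0:ℝ) 1 ∈ nhds (ustar i) := Ioo_mem_nhds hu0 hu1
    filter_upwards [hmem] with s hs
    have h1 : J (Function.update ustar i s) ≤ J ustar := by
      apply hmax
      intro j
      rcases eq_or_ne j i with h | h
      · subst h; simpa using hs
      · rw [Function.update_of_ne h]; exact hustar j
    have h2 : J ustar = -Real.exp (-γ * x) *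
        (Real.exp (-γ * (T - t) * (p i / (1 - p i) * (1 - ustar i) + C)) *
          (p i * Real.exp (γ * q i + γ * (T - t) * (p i / (1 - p i)) * (1 / ustar i - 1)) + S)) := by
      rw [← hφF (ustar i), Function.update_eq_self]
    rw [← hφF s, ← h2]
    exact h1
  have hF : HasDerivAt (fun s : ℝ => -Real.exp (-γ * x) *
      (Real.exp (-γ * (T - t) * (p i / (1 - p i) * (1 - s) + C)) *
        (p i * Real.exp (γ * q i + γ * (T - t) * (p i / (1 - p i)) * (1 / s - 1)) + S)))
      (-(Real.exp (-γ * x) *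
          Real.exp (-γ * (T - t) * (p i / (1 - p i) * (1 - ustar i) + C)) *
          (γ * (T - t) * (p i / (1 - p i)))) *
        ((p i * Real.exp (γ * q i + γ * (T - t) * (p i / (1 - p i)) * (1 / ustar i - 1)) + S)
          - p i * Real.exp (γ * q i + γ * (T - t) * (p i / (1 - p i)) * (1 / ustar i - 1))
            / ustar i ^ 2))
      (ustar i) := by
    have h1 : HasDerivAt (fun s : ℝ => 1 / s - 1) (-(ustar i ^ 2)⁻¹) (ustar i) := by
      simpa [one_div] using (hasDerivAt_inv hune).sub_const 1
    have h2 := ((h1.const_mul (γ * (T - t) * (p i / (1 - p i)))).const_add (γ * q i)).exp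
    have h3 := (h2.const_mul (p i)).add_const S
    have h4 := ((((hasDerivAt_id (ustar i)).const_sub 1).const_mul
        (p i / (1 - p i))).add_const C).const_mul (-γ * (T - t))
    have h5 := h4.exp.mul h3
    have h6 := h5.const_mul (-Real.exp (-γ * x))
    simp only [id_eq] at h6
    refine h6.congr_deriv ?_
    ring
  have hzero := hloc.hasDerivAt_eq_zero hF
  have hpos : 0 < Real.exp (-γ * x) *
      Real.exp (-γ * (T - t) * (p i / (1 - p i) * (1 - ustar i) + C)) *
      (γ * (T - t) * (p i / (1 - p i))) := by
    apply mul_pos (mul_pos (Real.exp_pos _) (Real.exp_pos _))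
    exact mul_pos (mul_pos hγ (sub_pos.2 htT)) (div_pos hp0 (by linarith))
  have hX : (p i * Real.exp (γ * q i + γ * (T - t) * (p i / (1 - p i)) * (1 / ustar i - 1)) + S)
      - p i * Real.exp (γ * q i + γ * (T - t) * (p i / (1 - p i)) * (1 / ustar i - 1))
        / ustar i ^ 2 = 0 := by
    rcases mul_eq_zero.mp hzero with h | h
    · exact absurd h (neg_ne_zero.mpr (ne_of_gt hpos))
    · exact h
  have hs2 : (ustar i) ^ 2 ≠ 0 := pow_ne_zero 2 hune
  linear_combination -hX
end

section
/- Let p ∈ (0,1). Then: (a) the equation r(1 + log r) = p has a unique solution r* in the interval (e^{−1}, 1); and (b) r* is the unique maximizer on (0,1] of the function u ↦ (log u / log p)·(u − p). -/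
/-!
On `[e⁻¹, 1]` the map `r ↦ r (1 + log r)` increases from `0` to `1`, which gives `r*`.
Since `g u = log u · (u − p)` has derivative `(u (1 + log u) − p) / u`, the point `r*` is a
critical point of `g`, and `g = u log u − p log u` is strictly convex on `(0, ∞)`; so `r*` is the
unique minimizer of `g`, hence the unique maximizer of `g / log p` as `log p < 0`.
-/

open Real Set

theorem strictMonoOn_mul_one_add_log :
    StrictMonoOn (fun r : ℝ => r * (1 + log r)) (Ici (exp (-1))) := by
  intro a ha b _ hab
  have ha0 : 0 < a := (exp_pos _).trans_le ha
  have hloga : 0 ≤ 1 + log a := by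
    have := log_le_log (exp_pos _) ha
    rw [log_exp] at this
    linarith
  have hlog : log a < log b := log_lt_log ha0 hab
  calc a * (1 + log a) ≤ b * (1 + log a) := mul_le_mul_of_nonneg_right hab.le hloga
    _ < b * (1 + log b) := by gcongr; exact ha0.trans hab

theorem exists_mem_Ioo_mul_one_add_log_eq {p : ℝ} (hp : p ∈ Ioo (0 : ℝ) 1) :
    ∃ r ∈ Ioo (exp (-1)) 1, r * (1 + log r) = p := by
  have hcont : ContinuousOn (fun r : ℝ => r * (1 + log r)) (Icc (exp (-1)) 1) :=
    continuousOn_id.mul (continuousOn_const.add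
      (continuousOn_log.mono fun x hx => ((exp_pos _).trans_le hx.1).ne'))
  refine intermediate_value_Ioo (exp_lt_one_iff.2 (by norm_num)).le hcont ?_
  simpa [log_exp] using hp

theorem strictConvexOn_log_mul_sub {p : ℝ} (hp : 0 ≤ p) :
    StrictConvexOn ℝ (Ioi 0) (fun u => log u * (u - p)) := by
  have h := (strictConvexOn_mul_log.subset Ioi_subset_Ici_self (convex_Ioi 0)).add_convexOn
    (strictConcaveOn_log_Ioi.concaveOn.smul hp).neg
  refine h.congr fun u _ => ?_
  simp only [Pi.add_apply, Pi.neg_apply, smul_eq_mul]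
  ring

theorem hasDerivAt_log_mul_sub (p : ℝ) {x : ℝ} (hx : 0 < x) :
    HasDerivAt (fun u => log u * (u - p)) ((x * (1 + log x) - p) / x) x := by
  refine ((hasDerivAt_log hx.ne').mul ((hasDerivAt_id' x).sub_const p)).congr_deriv ?_
  field_simp
  ring

theorem StrictConvexOn.lt_of_hasDerivAt_eq_zero {S : Set ℝ} {f : ℝ → ℝ} {x y : ℝ}
    (hf : StrictConvexOn ℝ S f) (hx : x ∈ S) (hy : y ∈ S) (hyx : y ≠ x) (hf' : HasDerivAt f 0 x) :
    f x < f y := by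
  rcases hyx.lt_or_gt with hlt | hgt
  · have := hf.slope_lt_of_hasDerivAt hy hx hlt hf'
    rw [slope_def_field, div_neg_iff] at this
    rcases this with ⟨_, h⟩ | ⟨h, _⟩ <;> linarith
  · have := hf.lt_slope_of_hasDerivAt hx hy hgt hf'
    rw [slope_def_field, div_pos_iff] at this
    rcases this with ⟨h, _⟩ | ⟨_, h⟩ <;> linarith

theorem log_div_log_mul_sub_lt {p r u : ℝ} (hp0 : 0 < p) (hp1 : p < 1) (hr : 0 < r)
    (hrp : r * (1 + log r) = p) (hu : 0 < u) (hur : u ≠ r) :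
    log u / log p * (u - p) < log r / log p * (r - p) := by
  have hmin : log r * (r - p) < log u * (u - p) :=
    (strictConvexOn_log_mul_sub hp0.le).lt_of_hasDerivAt_eq_zero hr hu hur
      (by simpa [hrp] using hasDerivAt_log_mul_sub p hr)
  rw [div_mul_eq_mul_div, div_mul_eq_mul_div]
  exact div_lt_div_of_neg_of_lt (log_neg hp0 hp1) hmin

/-- For `p ∈ (0,1)`: (a) the equation `r(1 + log r) = p` has a unique solution `r*` in
`(e⁻¹, 1)`; (b) `r*` is the unique maximizer on `(0,1]` of `u ↦ (log u / log p)·(u − p)`. -/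
theorem stmt8 (p : ℝ) (hp : p ∈ Set.Ioo (0:ℝ) 1) :
    ∃ r : ℝ, r ∈ Set.Ioo (Real.exp (-1)) 1 ∧ r * (1 + Real.log r) = p ∧
      (∀ r' ∈ Set.Ioo (Real.exp (-1)) 1, r' * (1 + Real.log r') = p → r' = r) ∧
      (∀ u ∈ Set.Ioc (0:ℝ) 1,
        Real.log u / Real.log p * (u - p) ≤ Real.log r / Real.log p * (r - p)) ∧
      (∀ u ∈ Set.Ioc (0:ℝ) 1,
        (∀ v ∈ Set.Ioc (0:ℝ) 1,
          Real.log v / Real.log p * (v - p) ≤ Real.log u / Real.log p * (u - p)) →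
        u = r) := by
  obtain ⟨r, hr, hrp⟩ := exists_mem_Ioo_mul_one_add_log_eq hp
  have hr0 : 0 < r := (exp_pos _).trans hr.1
  have hlt : ∀ u ∈ Ioc (0 : ℝ) 1, u ≠ r → log u / log p * (u - p) < log r / log p * (r - p) :=
    fun u hu => log_div_log_mul_sub_lt hp.1 hp.2 hr0 hrp hu.1
  refine ⟨r, hr, hrp, fun r' hr' hr'p => ?_, fun u hu => ?_, fun u hu hmax => ?_⟩
  · exact strictMonoOn_mul_one_add_log.injOn hr'.1.le hr.1.le (hr'p.trans hrp.symm)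
  · rcases eq_or_ne u r with rfl | hne
    · exact le_rfl
    · exact (hlt u hu hne).le
  · by_contra hne
    exact (hmax r ⟨hr0, hr.2.le⟩).not_gt (hlt u hu hne)
end

section
/- Define ψ₁ : (0,1) → ℝ by ψ₁(p) := (p/(1−p))·(2 − √p − 1/√p) + ((1−p)/p)·(1 − √(1−p)). Then ψ₁ is strictly decreasing on (0,1), lim_{p→0⁺} ψ₁(p) = 1/2, lim_{p→1⁻} ψ₁(p) = 0, and consequently ψ₁(p) > 0 for every p ∈ (0,1). -/
open Real Set Filter

noncomputable def phiAux (p : ℝ) : ℝ :=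
  Real.sqrt p + Real.sqrt (1-p) + 1/(1+Real.sqrt (1-p)) + 2/(1+Real.sqrt p) - 3

lemma psi_eq_phi {p : ℝ} (hp : p ∈ Set.Ioo (0:ℝ) 1) :
    p / (1 - p) * (2 - Real.sqrt p - 1 / Real.sqrt p)
      + (1 - p) / p * (1 - Real.sqrt (1 - p)) = phiAux p := by
  obtain ⟨h0, h1⟩ := hp
  have hs : 0 < Real.sqrt p := Real.sqrt_pos.mpr h0
  have ht : 0 < Real.sqrt (1-p) := Real.sqrt_pos.mpr (by linarith)
  set s := Real.sqrt p with hsdef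
  set t := Real.sqrt (1-p) with htdef
  have hs2 : s^2 = p := Real.sq_sqrt h0.le
  have ht2 : t^2 = 1 - p := Real.sq_sqrt (by linarith)
  have hs1 : s < 1 := by nlinarith
  have ht1 : t < 1 := by nlinarith
  have h1s : (1:ℝ) + s ≠ 0 := by positivity
  have h1t : (1:ℝ) + t ≠ 0 := by positivity
  have e1 : p / (1 - p) * (2 - s - 1/s) = s - 2 + 2/(1+s) := by
    rw [← hs2]
    have h1 : (1:ℝ) - s^2 ≠ 0 := by nlinarith
    field_simp
    ring
  have e2 : (1 - p) / p * (1 - t) = t - 1 + 1/(1+t) := by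
    have hpt : p = 1 - t^2 := by linarith
    rw [hpt]
    have h1 : (1:ℝ) - t^2 ≠ 0 := by nlinarith
    field_simp
    ring
  rw [e1, e2]
  unfold phiAux
  rw [← hsdef, ← htdef]
  ring

lemma phi_anti_core {s1 s2 t1 t2 : ℝ}
    (hs1 : 0 < s1) (hs12 : s1 < s2) (hs2 : s2 < 1)
    (ht2 : 0 < t2) (ht21 : t2 < t1) (ht1 : t1 < 1)
    (hrel : (s2 - s1) * (s1 + s2) = (t1 - t2) * (t1 + t2)) :
    s2 + t2 + 1/(1+t2) + 2/(1+s2) < s1 + t1 + 1/(1+t1) + 2/(1+s1) := by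
  set u := (1 + s1) * (1 + s2) with hu
  set v := (1 + t1) * (1 + t2) with hv
  have hupos : 0 < u := by rw [hu]; nlinarith
  have hvpos : 0 < v := by rw [hv]; nlinarith
  have hd : 0 < s2 - s1 := by linarith
  have he : 0 < t1 - t2 := by linarith
  have c1 : 8 * (u - 2) < 3 * u * (s1 + s2) := by
    rw [hu]
    nlinarith [mul_pos hs1 (sub_pos.mpr hs2), sq_nonneg (s1 - s2), sq_nonneg (s1 + s2),
      mul_pos hs1 hs1, mul_nonneg (mul_nonneg hs1.le hs1.le) hs1.le,
      mul_nonneg (sub_nonneg.mpr hs2.le) (sub_nonneg.mpr (le_of_lt (hs12.trans hs2)))]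
  have c2 : 3 * v * (t1 + t2) ≤ 8 * (v - 1) := by
    rw [hv]
    nlinarith [mul_nonneg (sub_nonneg.mpr ht1.le) (sub_nonneg.mpr (ht21.trans ht1).le),
      mul_pos ht2 ht2, sq_nonneg (t1 - t2), mul_pos (mul_pos ht2 ht2) ht2,
      mul_nonneg (sub_nonneg.mpr ht1.le) ht2.le]
  have key : (s2 - s1) * (u - 2) / u < (t1 - t2) * (v - 1) / v := by
    have h1 : (s2 - s1) * (u - 2) / u < 3/8 * ((s2 - s1) * (s1 + s2)) := by
      rw [div_lt_iff₀ hupos]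
      nlinarith [mul_lt_mul_of_pos_left c1 hd]
    have h2 : 3/8 * ((t1 - t2) * (t1 + t2)) ≤ (t1 - t2) * (v - 1) / v := by
      rw [le_div_iff₀ hvpos]
      nlinarith [mul_le_mul_of_nonneg_left c2 he.le]
    calc (s2 - s1) * (u - 2) / u < 3/8 * ((s2 - s1) * (s1 + s2)) := h1
      _ = 3/8 * ((t1 - t2) * (t1 + t2)) := by rw [hrel]
      _ ≤ (t1 - t2) * (v - 1) / v := h2
  have h1s1 : (1:ℝ) + s1 ≠ 0 := by linarith
  have h1s2 : (1:ℝ) + s2 ≠ 0 := by linarith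
  have h1t1 : (1:ℝ) + t1 ≠ 0 := by linarith
  have h1t2 : (1:ℝ) + t2 ≠ 0 := by linarith
  have expand : (s2 + t2 + 1/(1+t2) + 2/(1+s2)) - (s1 + t1 + 1/(1+t1) + 2/(1+s1))
      = (s2 - s1) * (u - 2) / u - (t1 - t2) * (v - 1) / v := by
    rw [hu, hv]
    field_simp
    ring
  linarith [expand, key]

lemma phi_anti : StrictAntiOn phiAux (Set.Ioo (0:ℝ) 1) := by
  intro p hp q hq hpq
  obtain ⟨hp0, hp1⟩ := hp
  obtain ⟨hq0, hq1⟩ := hq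
  have hs1 : 0 < Real.sqrt p := Real.sqrt_pos.mpr hp0
  have hs12 : Real.sqrt p < Real.sqrt q := Real.sqrt_lt_sqrt hp0.le hpq
  have hs2 : Real.sqrt q < 1 := by
    have h := Real.sqrt_lt_sqrt hq0.le hq1
    rwa [Real.sqrt_one] at h
  have ht2 : 0 < Real.sqrt (1-q) := Real.sqrt_pos.mpr (by linarith)
  have ht21 : Real.sqrt (1-q) < Real.sqrt (1-p) := Real.sqrt_lt_sqrt (by linarith) (by linarith)
  have ht1 : Real.sqrt (1-p) < 1 := by
    have h := Real.sqrt_lt_sqrt (by linarith : (0:ℝ) ≤ 1 - p) (by linarith : 1 - p < 1)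
    rwa [Real.sqrt_one] at h
  have hsp : (Real.sqrt p)^2 = p := Real.sq_sqrt hp0.le
  have hsq : (Real.sqrt q)^2 = q := Real.sq_sqrt hq0.le
  have htp : (Real.sqrt (1-p))^2 = 1-p := Real.sq_sqrt (by linarith)
  have htq : (Real.sqrt (1-q))^2 = 1-q := Real.sq_sqrt (by linarith)
  have hrel : (Real.sqrt q - Real.sqrt p) * (Real.sqrt p + Real.sqrt q)
      = (Real.sqrt (1-p) - Real.sqrt (1-q)) * (Real.sqrt (1-p) + Real.sqrt (1-q)) := by
    nlinarith [hsp, hsq, htp, htq]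
  have := phi_anti_core hs1 hs12 hs2 ht2 ht21 ht1 hrel
  unfold phiAux
  linarith

lemma phi_cont (x : ℝ) (h1 : (1:ℝ) + Real.sqrt (1-x) ≠ 0) (h2 : (1:ℝ) + Real.sqrt x ≠ 0) :
    ContinuousAt phiAux x := by
  have csq : Continuous fun p : ℝ => Real.sqrt p := Real.continuous_sqrt
  have csq' : Continuous fun p : ℝ => Real.sqrt (1-p) :=
    csq.comp (continuous_const.sub continuous_id)
  unfold phiAux
  exact ((((csq.continuousAt.add csq'.continuousAt).add
      (continuousAt_const.div (continuousAt_const.add csq'.continuousAt) h1)).add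
      (continuousAt_const.div (continuousAt_const.add csq.continuousAt) h2)).sub
      continuousAt_const)

/-- The coin-toss profit function
`ψ₁(p) = (p/(1−p))(2 − √p − 1/√p) + ((1−p)/p)(1 − √(1−p))` is strictly decreasing on
`(0,1)`, tends to `1/2` at `0⁺` and to `0` at `1⁻`, and is positive on `(0,1)`. -/
theorem stmt12 :
    let ψ : ℝ → ℝ := fun p =>
      p / (1 - p) * (2 - Real.sqrt p - 1 / Real.sqrt p)
        + (1 - p) / p * (1 - Real.sqrt (1 - p))
    StrictAntiOn ψ (Set.Ioo (0:ℝ) 1) ∧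
    Filter.Tendsto ψ (nhdsWithin 0 (Set.Ioi 0)) (nhds (1/2)) ∧
    Filter.Tendsto ψ (nhdsWithin 1 (Set.Iio 1)) (nhds 0) ∧
    (∀ p ∈ Set.Ioo (0:ℝ) 1, 0 < ψ p) := by
  intro ψ
  have hanti : StrictAntiOn ψ (Set.Ioo (0:ℝ) 1) := by
    intro p hp q hq hpq
    show ψ q < ψ p
    simp only [ψ, psi_eq_phi hp, psi_eq_phi hq]
    exact phi_anti hp hq hpq
  have hmem0 : Set.Ioo (0:ℝ) 1 ∈ nhdsWithin 0 (Set.Ioi 0) :=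
    Ioo_mem_nhdsGT_of_mem (by norm_num : (0:ℝ) ∈ Set.Ico 0 1)
  have hmem1 : Set.Ioo (0:ℝ) 1 ∈ nhdsWithin 1 (Set.Iio 1) :=
    Ioo_mem_nhdsLT_of_mem (by norm_num : (1:ℝ) ∈ Set.Ioc 0 1)
  have heq0 : phiAux =ᶠ[nhdsWithin 0 (Set.Ioi 0)] ψ := by
    filter_upwards [hmem0] with p hp
    exact (psi_eq_phi hp).symm
  have heq1 : phiAux =ᶠ[nhdsWithin 1 (Set.Iio 1)] ψ := by
    filter_upwards [hmem1] with p hp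
    exact (psi_eq_phi hp).symm
  have hval0 : phiAux 0 = 1/2 := by
    simp [phiAux, Real.sqrt_zero, Real.sqrt_one]; norm_num
  have hval1 : phiAux 1 = 0 := by
    simp [phiAux, Real.sqrt_zero, Real.sqrt_one]; norm_num
  have ht0 : Filter.Tendsto ψ (nhdsWithin 0 (Set.Ioi 0)) (nhds (1/2)) := by
    have := (phi_cont 0 (by norm_num [Real.sqrt_one]) (by norm_num)).tendsto
    rw [hval0] at this
    exact (this.mono_left nhdsWithin_le_nhds).congr' heq0
  have ht1 : Filter.Tendsto ψ (nhdsWithin 1 (Set.Iio 1)) (nhds 0) := by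
    have := (phi_cont 1 (by norm_num) (by norm_num [Real.sqrt_one])).tendsto
    rw [hval1] at this
    exact (this.mono_left nhdsWithin_le_nhds).congr' heq1
  refine ⟨hanti, ht0, ht1, ?_⟩
  intro p hp
  obtain ⟨hp0, hp1⟩ := hp
  set m := (p + 1) / 2 with hm
  have hmmem : m ∈ Set.Ioo (0:ℝ) 1 := ⟨by linarith, by linarith⟩
  have hpm : p < m := by rw [hm]; linarith
  have h0 : 0 ≤ ψ m := by
    refine le_of_tendsto ht1 ?_
    filter_upwards [Ioo_mem_nhdsLT_of_mem (⟨hmmem.2, le_refl 1⟩ : (1:ℝ) ∈ Set.Ioc m 1)]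
      with q hq
    exact (hanti hmmem ⟨hmmem.1.trans hq.1, hq.2⟩ hq.1).le
  have := hanti ⟨hp0, hp1⟩ hmmem hpm
  linarith
end

section
/- Under the shared series setup, for every q ∈ ℕ^n the power series x ↦ Σ_{k=0}^∞ α_k(q)·x^k has infinite radius of convergence; in particular, for every T ∈ ℝ the function G(t,q) := Σ_{k=0}^∞ α_k(q)·(T−t)^k is well defined and analytic in t on all of ℝ. -/
/-!
Dropping the multinomial coefficients (all `≥ 1`) from the multinomial expansion of
`(Σ_i |h_i|)^k` gives `|α_k(q)| ≤ M (Σ_i |h_i|)^k / k!`. The series `Σ_k α_k(q) x^k` is thus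
dominated by the exponential series of `(Σ_i |h_i|)|x|`, so its radius of convergence is
infinite and its sum is analytic everywhere.
-/

/-- The coefficients `α_k(q) = (1/k!)·Σ_{|j|=k} (Π_i h_i^{j_i})·d(q+j)` of the series
expansion of the transformed value function. -/
noncomputable def alphaC {n : ℕ} (h : Fin n → ℝ) (d : (Fin n → ℕ) → ℝ)
    (k : ℕ) (q : Fin n → ℕ) : ℝ :=
  (1 / (Nat.factorial k : ℝ)) *
    ∑ j ∈ Finset.Nat.antidiagonalTuple n k, (∏ i, h i ^ j i) * d (q + j)

open Finset FormalMultilinearSeries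
open scoped Nat

lemma Finset.sum_piAntidiag_prod_pow_le_sum_pow {α R : Type*} [DecidableEq α]
    [CommSemiring R] [PartialOrder R] [IsOrderedRing R]
    (s : Finset α) {f : α → R} (hf : ∀ i ∈ s, 0 ≤ f i) (k : ℕ) :
    ∑ j ∈ s.piAntidiag k, ∏ i ∈ s, f i ^ j i ≤ (∑ i ∈ s, f i) ^ k := by
  rw [sum_pow_eq_sum_piAntidiag]
  refine sum_le_sum fun j _ => le_mul_of_one_le_left
    (prod_nonneg fun i hi => pow_nonneg (hf i hi) _) ?_
  exact Nat.cast_one (R := R) ▸ Nat.mono_cast (Nat.multinomial_pos s j)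

section EntireSeries

variable {𝕜 : Type*} [NontriviallyNormedField 𝕜] {a : ℕ → 𝕜} {M c : ℝ}

lemma ofScalars_radius_eq_top_of_norm_le_pow_div_factorial
    (ha : ∀ k, ‖a k‖ ≤ M * c ^ k / k !) : (ofScalars 𝕜 a).radius = ⊤ := by
  refine radius_eq_top_of_summable_norm _ fun r => ?_
  refine .of_norm_bounded ((Real.summable_pow_div_factorial (c * r)).mul_left M) fun k => ?_
  rw [ofScalars_norm, Real.norm_eq_abs, abs_of_nonneg (by positivity)]
  calc ‖a k‖ * (r : ℝ) ^ k ≤ M * c ^ k / k ! * (r : ℝ) ^ k := by gcongr; exact ha k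
    _ = M * ((c * r) ^ k / k !) := by ring

lemma summable_mul_pow_of_norm_le_pow_div_factorial [CompleteSpace 𝕜]
    (ha : ∀ k, ‖a k‖ ≤ M * c ^ k / k !) (x : 𝕜) : Summable fun k => a k * x ^ k := by
  have hx : x ∈ Metric.eball (0 : 𝕜) (ofScalars 𝕜 a).radius := by
    simp [ofScalars_radius_eq_top_of_norm_le_pow_div_factorial ha]
  simpa only [ofScalars_apply_eq, smul_eq_mul] using (ofScalars 𝕜 a).summable hx

lemma analyticAt_tsum_mul_pow_of_norm_le_pow_div_factorial [CompleteSpace 𝕜]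
    (ha : ∀ k, ‖a k‖ ≤ M * c ^ k / k !) (x : 𝕜) :
    AnalyticAt 𝕜 (fun x => ∑' k, a k * x ^ k) x := by
  rw [show (fun x : 𝕜 => ∑' k, a k * x ^ k) = (ofScalars 𝕜 a).sum from
    (ofScalarsSum_eq_tsum a).symm]
  exact (ofScalars 𝕜 a).analyticOnNhd x (by
    simp [ofScalars_radius_eq_top_of_norm_le_pow_div_factorial ha])

end EntireSeries

lemma abs_alphaC_le {n : ℕ} (h : Fin n → ℝ) {d : (Fin n → ℕ) → ℝ} {M : ℝ}
    (hd : ∀ q, |d q| ≤ M) (k : ℕ) (q : Fin n → ℕ) :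
    |alphaC h d k q| ≤ M * (∑ i, |h i|) ^ k / k ! := by
  have hmono : ∑ j ∈ Nat.antidiagonalTuple n k, ∏ i, |h i| ^ j i ≤ (∑ i, |h i|) ^ k := by
    rw [← piAntidiag_univ_fin_eq_antidiagonalTuple]
    exact univ.sum_piAntidiag_prod_pow_le_sum_pow (fun i _ => abs_nonneg (h i)) k
  have hsum : |∑ j ∈ Nat.antidiagonalTuple n k, (∏ i, h i ^ j i) * d (q + j)|
      ≤ M * (∑ i, |h i|) ^ k := by
    calc _ ≤ ∑ j ∈ Nat.antidiagonalTuple n k, (∏ i, |h i| ^ j i) * M := by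
          refine (abs_sum_le_sum_abs _ _).trans (sum_le_sum fun j _ => ?_)
          rw [abs_mul, abs_prod]
          simp only [abs_pow]
          exact mul_le_mul_of_nonneg_left (hd _) (by positivity)
      _ ≤ (∑ i, |h i|) ^ k * M := by
          rw [← sum_mul]
          exact mul_le_mul_of_nonneg_right hmono ((abs_nonneg _).trans (hd q))
      _ = M * (∑ i, |h i|) ^ k := mul_comm _ _
  rw [alphaC, abs_mul, abs_of_nonneg (by positivity), one_div_mul_eq_div]
  gcongr

theorem stmt13_general {n : ℕ} (h : Fin n → ℝ)
    (d : (Fin n → ℕ) → ℝ) (M : ℝ) (hd : ∀ q, |d q| ≤ M)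
    (q : Fin n → ℕ) :
    (∀ x : ℝ, Summable fun k => alphaC h d k q * x ^ k) ∧
    (∀ T : ℝ, ∀ t : ℝ, AnalyticAt ℝ (fun t : ℝ => ∑' k, alphaC h d k q * (T - t) ^ k) t) := by
  have hα : ∀ k, ‖alphaC h d k q‖ ≤ M * (∑ i, |h i|) ^ k / k ! := fun k =>
    abs_alphaC_le h hd k q
  refine ⟨summable_mul_pow_of_norm_le_pow_div_factorial hα, fun T t => ?_⟩
  exact (analyticAt_tsum_mul_pow_of_norm_le_pow_div_factorial hα (T - t)).comp
    (analyticAt_const.sub analyticAt_id)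

/-- Under the shared series setup, the power series `Σ_k α_k(q)·x^k` has infinite radius
of convergence; in particular `G(t,q) = Σ_k α_k(q)(T−t)^k` is well defined and analytic
in `t` on all of `ℝ`. -/
theorem stmt13 {n : ℕ} (hn : 1 ≤ n) (h : Fin n → ℝ) (hh : ∀ i, 0 ≤ h i)
    (d : (Fin n → ℕ) → ℝ) (M : ℝ) (hM : 0 ≤ M) (hd : ∀ q, |d q| ≤ M)
    (q : Fin n → ℕ) :
    (∀ x : ℝ, Summable fun k => alphaC h d k q * x ^ k) ∧
    (∀ T : ℝ, ∀ t : ℝ, AnalyticAt ℝ (fun t : ℝ => ∑' k, alphaC h d k q * (T - t) ^ k) t) :=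
  stmt13_general h d M hd q
end

section
/- Let n ≥ 1, T > 0, c > 0 and b_1,…,b_n > 0, and set h_i := c·b_i. Let H : [0,T] × ℕ^n → (0,∞) be such that t ↦ H(t,q) is differentiable for each q ∈ ℕ^n, and define G(t,q) := H(t,q)^{−c}. Then H satisfies ∂_t H(t,q) − Σ_{i=1}^n b_i·H(t,q)^{c+1}/H(t,q+e_i)^c = 0 for all (t,q) if and only if G satisfies the linear system ∂_t G(t,q) + Σ_{i=1}^n h_i·G(t,q+e_i) = 0 for all (t,q), where e_i is the i-th standard unit vector of ℕ^n. -/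
/-- The power transformation `G = H^{−c}` converts the nonlinear equation
`∂_t H = Σ_i b_i·H^{c+1}/H(·,q+e_i)^c` into the linear system
`∂_t G + Σ_i h_i·G(·,q+e_i) = 0`, where `h_i = c·b_i`. -/
theorem stmt17 {n : ℕ} (hn : 1 ≤ n) (T : ℝ) (hT : 0 < T) (c : ℝ) (hc : 0 < c)
    (b : Fin n → ℝ) (hb : ∀ i, 0 < b i)
    (H : ℝ → (Fin n → ℕ) → ℝ)
    (hHpos : ∀ t ∈ Set.Icc (0:ℝ) T, ∀ q, 0 < H t q)
    (hHdiff : ∀ q, Differentiable ℝ (fun t => H t q)) :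
    let h : Fin n → ℝ := fun i => c * b i
    let G : ℝ → (Fin n → ℕ) → ℝ := fun t q => H t q ^ (-c)
    ((∀ t ∈ Set.Icc (0:ℝ) T, ∀ q : Fin n → ℕ,
        deriv (fun t => H t q) t
          - ∑ i, b i * H t q ^ (c + 1) / H t (q + Pi.single i 1) ^ c = 0) ↔
     (∀ t ∈ Set.Icc (0:ℝ) T, ∀ q : Fin n → ℕ,
        deriv (fun t => G t q) t
          + ∑ i, h i * G t (q + Pi.single i 1) = 0)) := by
  intro h G
  -- the key pointwise identity relating the two equations
  have key : ∀ t ∈ Set.Icc (0:ℝ) T, ∀ q : Fin n → ℕ,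
      deriv (fun t => G t q) t + ∑ i, h i * G t (q + Pi.single i 1)
        = (-c * H t q ^ (-c - 1)) *
          (deriv (fun t => H t q) t
            - ∑ i, b i * H t q ^ (c + 1) / H t (q + Pi.single i 1) ^ c) := by
    intro t ht q
    have hpos := hHpos t ht q
    have hderivG : deriv (fun t => G t q) t
        = -c * H t q ^ (-c - 1) * deriv (fun t => H t q) t := by
      have hH : HasDerivAt (fun t => H t q) (deriv (fun t => H t q) t) t :=
        ((hHdiff q) t).hasDerivAt
      have := hH.rpow_const (p := -c) (Or.inl (ne_of_gt hpos))
      simpa [mul_comm, mul_assoc, mul_left_comm] using this.deriv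
    rw [hderivG]
    rw [mul_sub]
    have hterm : ∀ i : Fin n,
        h i * G t (q + Pi.single i 1)
          = -c * H t q ^ (-c - 1) *
            -(b i * H t q ^ (c + 1) / H t (q + Pi.single i 1) ^ c) := by
      intro i
      have hposi := hHpos t ht (q + Pi.single i 1)
      have h1 : H t q ^ (-c - 1) * H t q ^ (c + 1) = 1 := by
        rw [← Real.rpow_add hpos]
        norm_num
      have h2 : G t (q + Pi.single i 1) = (H t (q + Pi.single i 1) ^ c)⁻¹ := by
        simp [G, Real.rpow_neg hposi.le]
      have h1' : H t q ^ (-1 - c) * H t q ^ (1 + c) = 1 := by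
        rw [← Real.rpow_add hpos]; norm_num
      rw [h2]
      field_simp [h]
      ring_nf
      show c * b i = _; rw [show c * H t q ^ (-1 - c) * b i * H t q ^ (1 + c) = c * b i * (H t q ^ (-1 - c) * H t q ^ (1 + c)) by ring, h1', mul_one]
    have : ∑ i, h i * G t (q + Pi.single i 1)
        = ∑ i, -c * H t q ^ (-c - 1) *
            -(b i * H t q ^ (c + 1) / H t (q + Pi.single i 1) ^ c) :=
      Finset.sum_congr rfl fun i _ => hterm i
    rw [this]
    simp only [mul_neg, Finset.sum_neg_distrib, Finset.mul_sum]
    ring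
  have hne : ∀ t ∈ Set.Icc (0:ℝ) T, ∀ q : Fin n → ℕ,
      (-c * H t q ^ (-c - 1)) ≠ 0 := by
    intro t ht q
    have hpos := hHpos t ht q
    have hx : (0:ℝ) < H t q ^ (-c - 1) := Real.rpow_pos_of_pos hpos _
    exact mul_ne_zero (neg_ne_zero.mpr hc.ne') hx.ne'
  constructor
  · intro h1 t ht q
    rw [key t ht q, h1 t ht q, mul_zero]
  · intro h2 t ht q
    have := h2 t ht q
    rw [key t ht q] at this
    exact (mul_eq_zero.mp this).resolve_left (hne t ht q)
end
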